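/- arXiv:2601.14067 — 5 statements merged into one kernel-verified Lean document; each statement's English description precedes it below -/
import Mathlib

section
/- Let f : ℝ² → ℝ be a bounded continuous function satisfying f(x) = ∫_{ℝ²} π⁻¹ · exp(-‖x - y‖²) · f(y) dy for every x ∈ ℝ². Then f is constant, i.e., there exists c ∈ ℝ with f(x) = c for all x ∈ ℝ². -/
/-!
The kernels `g_a(u) = (a/π)^{d/2} exp(-a‖u‖²)` form a semigroup under convolution,
`g_a ⋆ g_b = g_{ab/(a+b)}`, so a bounded fixed point `f = f ⋆ g_1` is also a fixed point of every
`g_{1/n}`. Hence `|f(x) - f(y)| ≤ sup |f| · ‖g_{1/n}(x - y + ·) - g_{1/n}‖₁`, and this `L¹` distance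
between two translates of an increasingly spread-out Gaussian is `O(‖x - y‖ / √n)`.
-/

open MeasureTheory Real ContinuousLinearMap Filter Module Topology
open scoped Convolution

theorem mul_exp_neg_mul_sq_le {a : ℝ} (ha : 0 < a) (s : ℝ) :
    s * rexp (-a * s ^ 2) ≤ (√a)⁻¹ * rexp (-(a / 2) * s ^ 2) := by
  have hsqrt : √a * s ≤ rexp (a / 2 * s ^ 2) := by
    nlinarith [add_one_le_exp (a / 2 * s ^ 2), sq_nonneg (√a * s - 1), sq_sqrt ha.le]
  calc s * rexp (-a * s ^ 2)
      = (√a)⁻¹ * (√a * s * rexp (-(a / 2 * s ^ 2))) * rexp (-(a / 2) * s ^ 2) := by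
        rw [show -a * s ^ 2 = -(a / 2 * s ^ 2) + -(a / 2) * s ^ 2 by ring, Real.exp_add]
        field_simp
    _ ≤ (√a)⁻¹ * (rexp (a / 2 * s ^ 2) * rexp (-(a / 2 * s ^ 2))) * rexp (-(a / 2) * s ^ 2) := by
        gcongr
    _ = (√a)⁻¹ * rexp (-(a / 2) * s ^ 2) := by
        rw [← Real.exp_add, add_neg_cancel, Real.exp_zero, mul_one]

theorem abs_exp_neg_sub_exp_neg_le (x y : ℝ) :
    |rexp (-x) - rexp (-y)| ≤ |x - y| * (rexp (-x) + rexp (-y)) := by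
  wlog hxy : x ≤ y generalizing x y
  · rw [abs_sub_comm, abs_sub_comm x, add_comm]
    exact this y x (le_of_not_ge hxy)
  have hy : rexp (-y) = rexp (-x) * rexp (-(y - x)) := by rw [← Real.exp_add]; ring_nf
  rw [abs_of_nonneg (by simpa using hxy), abs_sub_comm, abs_of_nonneg (by linarith)]
  nlinarith [add_one_le_exp (-(y - x)), Real.exp_pos (-x), Real.exp_pos (-y)]

section Convolution

variable {G : Type*} [AddCommGroup G] [MeasurableSpace G] [MeasurableAdd₂ G] [MeasurableNeg G]
  {μ : Measure G} [μ.IsAddLeftInvariant] [μ.IsNegInvariant]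
  {f g k : G → ℝ} {C : ℝ}

theorem convolutionExistsAt_of_bounded_left (hf : AEStronglyMeasurable f μ)
    (hfC : ∀ x, |f x| ≤ C) (hg : Integrable g μ) (x : G) :
    ConvolutionExistsAt f g x (mul ℝ ℝ) μ := by
  simpa [ConvolutionExistsAt] using (hg.comp_sub_left x).bdd_mul hf (.of_forall hfC)

theorem convolution_assoc_of_bounded_left [SFinite μ] (hf : AEStronglyMeasurable f μ)
    (hfC : ∀ x, |f x| ≤ C) (hg : Integrable g μ) (hk : Integrable k μ) :
    (f ⋆[mul ℝ ℝ, μ] g) ⋆[mul ℝ ℝ, μ] k = f ⋆[mul ℝ ℝ, μ] (g ⋆[mul ℝ ℝ, μ] k) := by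
  funext x
  refine convolution_assoc _ _ _ _ (fun _ _ _ => mul_assoc _ _ _) hf hg.1 hk.1
    (.of_forall (convolutionExistsAt_of_bounded_left hf hfC hg))
    (hg.norm.ae_convolution_exists _ hk.norm) ?_
  exact convolutionExistsAt_of_bounded_left hf.norm (C := C) (by simpa using hfC)
      (hg.norm.integrable_convolution (mul ℝ ℝ) hk.norm) x

theorem abs_convolution_sub_convolution_le (hf : AEStronglyMeasurable f μ)
    (hfC : ∀ x, |f x| ≤ C) (hg : Integrable g μ) (x y : G) :
    |(f ⋆[mul ℝ ℝ, μ] g) x - (f ⋆[mul ℝ ℝ, μ] g) y| ≤ C * ∫ t, |g (x - y + t) - g t| ∂μ := by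
  have hx := convolutionExistsAt_of_bounded_left hf hfC hg x
  have hy := convolutionExistsAt_of_bounded_left hf hfC hg y
  rw [convolution_def, convolution_def, ← integral_sub hx hy]
  calc _ ≤ ∫ t, C * |g (x - t) - g (y - t)| ∂μ := by
        refine abs_integral_le_integral_abs.trans (integral_mono (hx.sub hy).abs ?_ fun t => ?_)
        · exact ((hg.comp_sub_left x).sub (hg.comp_sub_left y)).abs.const_mul C
        · simp only [mul_apply', ← mul_sub, abs_mul]
          exact mul_le_mul_of_nonneg_right (hfC t) (abs_nonneg _)
    _ = C * ∫ t, |g (x - y + t) - g t| ∂μ := by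
        rw [integral_const_mul, ← integral_sub_left_eq_self _ μ y]
        simp only [sub_sub_cancel, sub_add_eq_add_sub, sub_sub_eq_add_sub]

theorem eq_of_forall_convolution_eq_self {ι : Type*} {l : Filter ι} [l.NeBot]
    {φ : ι → G → ℝ} (hf : AEStronglyMeasurable f μ) (hfC : ∀ x, |f x| ≤ C)
    (hφ : ∀ i, Integrable (φ i) μ) (hfix : ∀ i, f ⋆[mul ℝ ℝ, μ] φ i = f)
    (hspread : ∀ v, Tendsto (fun i => ∫ t, |φ i (v + t) - φ i t| ∂μ) l (𝓝 0)) (x y : G) :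
    f x = f y := by
  have hle : ∀ i, |f x - f y| ≤ C * ∫ t, |φ i (x - y + t) - φ i t| ∂μ := fun i => by
    simpa only [hfix i] using abs_convolution_sub_convolution_le hf hfC (hφ i) x y
  have h0 : |f x - f y| ≤ C * 0 := ge_of_tendsto' ((hspread (x - y)).const_mul C) hle
  rw [mul_zero, abs_nonpos_iff, sub_eq_zero] at h0
  exact h0

end Convolution

section Gaussian

variable {V : Type*} [NormedAddCommGroup V] [InnerProductSpace ℝ V] {a b : ℝ}

/-- The density of the centred Gaussian with covariance `(2a)⁻¹ • 1`. -/
noncomputable def gaussianKernel (a : ℝ) (u : V) : ℝ :=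
  (a / π) ^ (finrank ℝ V / 2 : ℝ) * rexp (-a * ‖u‖ ^ 2)

theorem gaussianKernel_nonneg (ha : 0 ≤ a) (u : V) : 0 ≤ gaussianKernel a u := by
  unfold gaussianKernel; positivity

theorem continuous_gaussianKernel (a : ℝ) : Continuous (gaussianKernel a : V → ℝ) := by
  unfold gaussianKernel; fun_prop

theorem mul_sq_norm_add_mul_sq_norm_sub (hab : a + b ≠ 0) (x t : V) :
    a * ‖t‖ ^ 2 + b * ‖x - t‖ ^ 2
      = (a + b) * ‖t - (b / (a + b)) • x‖ ^ 2 + a * b / (a + b) * ‖x‖ ^ 2 := by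
  simp only [norm_sub_sq_real, norm_smul, inner_smul_right, real_inner_comm x t, mul_pow,
    Real.norm_eq_abs, sq_abs]
  field_simp
  ring

theorem norm_mul_gaussianKernel_le (ha : 0 < a) (u : V) :
    ‖u‖ * gaussianKernel a u ≤ 2 ^ (finrank ℝ V / 2 : ℝ) / √a * gaussianKernel (a / 2) u := by
  have hsplit : (a / π) ^ (finrank ℝ V / 2 : ℝ)
      = 2 ^ (finrank ℝ V / 2 : ℝ) * (a / 2 / π) ^ (finrank ℝ V / 2 : ℝ) := by
    rw [← mul_rpow zero_le_two (by positivity)]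
    ring_nf
  calc ‖u‖ * gaussianKernel a u
      = (a / π) ^ (finrank ℝ V / 2 : ℝ) * (‖u‖ * rexp (-a * ‖u‖ ^ 2)) := by
        simp only [gaussianKernel]; ring
    _ ≤ (a / π) ^ (finrank ℝ V / 2 : ℝ) * ((√a)⁻¹ * rexp (-(a / 2) * ‖u‖ ^ 2)) :=
        mul_le_mul_of_nonneg_left (mul_exp_neg_mul_sq_le ha _) (by positivity)
    _ = 2 ^ (finrank ℝ V / 2 : ℝ) / √a * gaussianKernel (a / 2) u := by
        simp only [gaussianKernel, hsplit]; ring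

theorem abs_gaussianKernel_add_sub_le (ha : 0 ≤ a) (v u : V) :
    |gaussianKernel a (v + u) - gaussianKernel a u|
      ≤ a * (‖v‖ ^ 2 + 2 * ‖v‖ * ‖u‖) * (gaussianKernel a (v + u) + gaussianKernel a u) := by
  have hexp : |a * ‖v + u‖ ^ 2 - a * ‖u‖ ^ 2| ≤ a * (‖v‖ ^ 2 + 2 * ‖v‖ * ‖u‖) := by
    rw [← mul_sub, abs_mul, abs_of_nonneg ha, norm_add_sq_real]
    gcongr
    calc |‖v‖ ^ 2 + 2 * inner ℝ v u + ‖u‖ ^ 2 - ‖u‖ ^ 2| = |‖v‖ ^ 2 + 2 * inner ℝ v u| := by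
          ring_nf
      _ ≤ ‖v‖ ^ 2 + 2 * ‖v‖ * ‖u‖ := by
          refine (abs_add_le _ _).trans ?_
          rw [abs_of_nonneg (by positivity), abs_mul, abs_two, mul_assoc]
          gcongr
          exact abs_real_inner_le_norm v u
  have hc : 0 ≤ (a / π) ^ (finrank ℝ V / 2 : ℝ) := by positivity
  simp only [gaussianKernel, neg_mul, ← mul_sub, ← mul_add, abs_mul, abs_of_nonneg hc]
  calc (a / π) ^ (finrank ℝ V / 2 : ℝ) * |rexp (-(a * ‖v + u‖ ^ 2)) - rexp (-(a * ‖u‖ ^ 2))|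
      ≤ (a / π) ^ (finrank ℝ V / 2 : ℝ) * (|a * ‖v + u‖ ^ 2 - a * ‖u‖ ^ 2|
          * (rexp (-(a * ‖v + u‖ ^ 2)) + rexp (-(a * ‖u‖ ^ 2)))) := by
        gcongr; exact abs_exp_neg_sub_exp_neg_le _ _
    _ ≤ _ := by
        rw [mul_left_comm]
        gcongr

theorem norm_mul_gaussianKernel_add_le (ha : 0 ≤ a) (v u : V) :
    ‖u‖ * gaussianKernel a (v + u)
      ≤ ‖v‖ * gaussianKernel a (v + u) + ‖v + u‖ * gaussianKernel a (v + u) := by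
  rw [← add_mul]
  have := gaussianKernel_nonneg ha (v + u)
  gcongr
  simpa [add_comm] using norm_sub_le (v + u) v

variable [FiniteDimensional ℝ V] [MeasurableSpace V] [BorelSpace V]

theorem integrable_exp_neg_mul_sq_norm (ha : 0 < a) :
    Integrable (fun u : V => rexp (-a * ‖u‖ ^ 2)) := by
  simpa [Complex.norm_exp, ← Complex.ofReal_pow] using
    (GaussianFourier.integrable_cexp_neg_mul_sq_norm_add (V := V) (b := a) (by simpa) 0 0).norm

theorem integrable_gaussianKernel (ha : 0 < a) : Integrable (gaussianKernel a : V → ℝ) :=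
  (integrable_exp_neg_mul_sq_norm ha).const_mul _

theorem integral_gaussianKernel (ha : 0 < a) : ∫ u : V, gaussianKernel a u = 1 := by
  simp only [gaussianKernel]
  rw [integral_const_mul, GaussianFourier.integral_rexp_neg_mul_sq_norm ha,
    ← mul_rpow (by positivity) (by positivity), div_mul_div_cancel₀ pi_ne_zero, div_self ha.ne',
    one_rpow]

theorem gaussianKernel_convolution (ha : 0 < a) (hb : 0 < b) :
    (gaussianKernel a : V → ℝ) ⋆[mul ℝ ℝ] gaussianKernel b
      = gaussianKernel (a * b / (a + b)) := by
  funext x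
  have hab : 0 < a + b := add_pos ha hb
  have hprod : ∀ t : V, gaussianKernel a t * gaussianKernel b (x - t)
      = ((a / π) ^ (finrank ℝ V / 2 : ℝ) * (b / π) ^ (finrank ℝ V / 2 : ℝ) *
          rexp (-(a * b / (a + b)) * ‖x‖ ^ 2))
        * rexp (-(a + b) * ‖t - (b / (a + b)) • x‖ ^ 2) := by
    intro t
    simp only [gaussianKernel]
    rw [mul_mul_mul_comm, ← Real.exp_add, mul_assoc (_ * _) (rexp _), ← Real.exp_add]
    congr 2
    linear_combination -(mul_sq_norm_add_mul_sq_norm_sub hab.ne' x t)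
  simp only [convolution_def, mul_apply', hprod]
  rw [integral_const_mul, integral_sub_right_eq_self (fun t : V => rexp (-(a + b) * ‖t‖ ^ 2)),
    GaussianFourier.integral_rexp_neg_mul_sq_norm hab, gaussianKernel, mul_right_comm,
    ← mul_rpow (by positivity) (by positivity), ← mul_rpow (by positivity) (by positivity)]
  congr 2
  field_simp

theorem integrable_norm_mul_gaussianKernel (ha : 0 < a) :
    Integrable (fun u : V => ‖u‖ * gaussianKernel a u) :=
  ((integrable_gaussianKernel (half_pos ha)).const_mul _).mono'
    (continuous_norm.mul (continuous_gaussianKernel a)).aestronglyMeasurable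
    (.of_forall fun u => by
      rw [Real.norm_of_nonneg (mul_nonneg (norm_nonneg u) (gaussianKernel_nonneg ha.le u))]
      exact norm_mul_gaussianKernel_le ha u)

theorem integral_norm_mul_gaussianKernel_le (ha : 0 < a) :
    ∫ u : V, ‖u‖ * gaussianKernel a u ≤ 2 ^ (finrank ℝ V / 2 : ℝ) / √a := by
  calc ∫ u : V, ‖u‖ * gaussianKernel a u
      ≤ ∫ u : V, 2 ^ (finrank ℝ V / 2 : ℝ) / √a * gaussianKernel (a / 2) u :=
        integral_mono (integrable_norm_mul_gaussianKernel ha)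
          ((integrable_gaussianKernel (half_pos ha)).const_mul _) (norm_mul_gaussianKernel_le ha)
    _ = 2 ^ (finrank ℝ V / 2 : ℝ) / √a := by
        rw [integral_const_mul, integral_gaussianKernel (half_pos ha), mul_one]

theorem integrable_norm_mul_gaussianKernel_add (ha : 0 < a) (v : V) :
    Integrable (fun u : V => ‖u‖ * gaussianKernel a (v + u)) :=
  ((((integrable_gaussianKernel ha).comp_add_left v).const_mul ‖v‖).add
    ((integrable_norm_mul_gaussianKernel ha).comp_add_left v)).mono'
    (continuous_norm.mul ((continuous_gaussianKernel a).comp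
      (continuous_const_add v))).aestronglyMeasurable
    (.of_forall fun u => by
      rw [Real.norm_of_nonneg (mul_nonneg (norm_nonneg u) (gaussianKernel_nonneg ha.le _))]
      exact norm_mul_gaussianKernel_add_le ha.le v u)

theorem integral_norm_mul_gaussianKernel_add_le (ha : 0 < a) (v : V) :
    ∫ u : V, ‖u‖ * gaussianKernel a (v + u) ≤ ‖v‖ + 2 ^ (finrank ℝ V / 2 : ℝ) / √a := by
  have hK := (integrable_gaussianKernel ha).comp_add_left v
  have hnK := (integrable_norm_mul_gaussianKernel ha).comp_add_left v
  calc ∫ u : V, ‖u‖ * gaussianKernel a (v + u)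
      ≤ ∫ u : V, (‖v‖ * gaussianKernel a (v + u) + ‖v + u‖ * gaussianKernel a (v + u)) :=
        integral_mono (integrable_norm_mul_gaussianKernel_add ha v) ((hK.const_mul _).add hnK)
          (norm_mul_gaussianKernel_add_le ha.le v)
    _ ≤ ‖v‖ + 2 ^ (finrank ℝ V / 2 : ℝ) / √a := by
        rw [integral_add (hK.const_mul _) hnK, integral_const_mul,
          integral_add_left_eq_self (gaussianKernel a) v, integral_gaussianKernel ha, mul_one,
          integral_add_left_eq_self (fun w => ‖w‖ * gaussianKernel a w) v]
        grw [integral_norm_mul_gaussianKernel_le ha]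

theorem integral_abs_gaussianKernel_add_sub_le (ha : 0 < a) (v : V) :
    ∫ u : V, |gaussianKernel a (v + u) - gaussianKernel a u|
      ≤ 4 * a * ‖v‖ ^ 2 + 4 * 2 ^ (finrank ℝ V / 2 : ℝ) * √a * ‖v‖ := by
  set M : ℝ := 2 ^ (finrank ℝ V / 2 : ℝ) / √a
  have hK := integrable_gaussianKernel (V := V) ha
  have hA := (hK.comp_add_left v).const_mul (a * ‖v‖ ^ 2)
  have hB := hK.const_mul (a * ‖v‖ ^ 2)
  have hC := (integrable_norm_mul_gaussianKernel_add ha v).const_mul (2 * a * ‖v‖)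
  have hD := (integrable_norm_mul_gaussianKernel (V := V) ha).const_mul (2 * a * ‖v‖)
  calc ∫ u : V, |gaussianKernel a (v + u) - gaussianKernel a u|
      ≤ ∫ u : V, (a * ‖v‖ ^ 2 * gaussianKernel a (v + u) + a * ‖v‖ ^ 2 * gaussianKernel a u
          + 2 * a * ‖v‖ * (‖u‖ * gaussianKernel a (v + u))
          + 2 * a * ‖v‖ * (‖u‖ * gaussianKernel a u)) :=
        integral_mono ((hK.comp_add_left v).sub hK).abs (((hA.add hB).add hC).add hD)
          fun u => (abs_gaussianKernel_add_sub_le ha.le v u).trans_eq (by ring)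
    _ = a * ‖v‖ ^ 2 + a * ‖v‖ ^ 2
          + 2 * a * ‖v‖ * (∫ u : V, ‖u‖ * gaussianKernel a (v + u))
          + 2 * a * ‖v‖ * ∫ u : V, ‖u‖ * gaussianKernel a u := by
        rw [integral_add _ hD, integral_add _ hC, integral_add hA hB,
          integral_const_mul, integral_const_mul, integral_const_mul, integral_const_mul,
          integral_add_left_eq_self (gaussianKernel a) v, integral_gaussianKernel ha, mul_one]
        exacts [hA.add hB, (hA.add hB).add hC]
    _ ≤ a * ‖v‖ ^ 2 + a * ‖v‖ ^ 2 + 2 * a * ‖v‖ * (‖v‖ + M) + 2 * a * ‖v‖ * M := by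
        gcongr
        exacts [integral_norm_mul_gaussianKernel_add_le ha v,
          integral_norm_mul_gaussianKernel_le ha]
    _ = 4 * a * ‖v‖ ^ 2 + 4 * 2 ^ (finrank ℝ V / 2 : ℝ) * √a * ‖v‖ := by
        simp only [M]
        field_simp
        linear_combination (4 * ‖v‖ * 2 ^ (finrank ℝ V / 2 : ℝ)) * (sq_sqrt ha.le).symm

theorem tendsto_integral_abs_gaussianKernel_add_sub (v : V) :
    Tendsto (fun a => ∫ u : V, |gaussianKernel a (v + u) - gaussianKernel a u|)
      (𝓝[>] 0) (𝓝 0) := by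
  set bound : ℝ → ℝ := fun a => 4 * a * ‖v‖ ^ 2 + 4 * 2 ^ (finrank ℝ V / 2 : ℝ) * √a * ‖v‖
  have hbound : Tendsto bound (𝓝[>] 0) (𝓝 0) := by
    refine tendsto_nhdsWithin_of_tendsto_nhds ?_
    have hc : Continuous bound := by fun_prop
    simpa [bound] using hc.tendsto 0
  refine tendsto_of_tendsto_of_tendsto_of_le_of_le' tendsto_const_nhds hbound
    (.of_forall fun a => integral_nonneg fun u => abs_nonneg _) ?_
  filter_upwards [self_mem_nhdsWithin] with a ha
  exact integral_abs_gaussianKernel_add_sub_le ha v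

theorem convolution_gaussianKernel_one_div_succ_eq_self {f : V → ℝ} {C : ℝ}
    (hf : AEStronglyMeasurable f)
    (hfC : ∀ x, |f x| ≤ C) (hfix : f ⋆[mul ℝ ℝ] gaussianKernel 1 = f) (n : ℕ) :
    f ⋆[mul ℝ ℝ] gaussianKernel (1 / (n + 1 : ℝ)) = f := by
  induction n with
  | zero => simpa using hfix
  | succ n ih =>
    have hn : (1 / (n + 1 : ℝ)) * 1 / (1 / (n + 1 : ℝ) + 1) = 1 / ((n + 1 : ℕ) + 1 : ℝ) := by
      field_simp
      push_cast
      ring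
    rw [← hn, ← gaussianKernel_convolution (by positivity) one_pos,
      ← convolution_assoc_of_bounded_left hf hfC
        (integrable_gaussianKernel (by positivity)) (integrable_gaussianKernel one_pos), ih, hfix]

end Gaussian

/-- If a bounded continuous function `f : ℝ² → ℝ` equals its own convolution with the
Gaussian kernel `g(u) = π⁻¹ exp(-‖u‖²)`, then `f` is constant. -/
theorem stmt0 (f : EuclideanSpace ℝ (Fin 2) → ℝ)
    (hcont : Continuous f) (hbdd : ∃ C : ℝ, ∀ x, |f x| ≤ C)
    (hfix : ∀ x : EuclideanSpace ℝ (Fin 2),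
      f x = ∫ y : EuclideanSpace ℝ (Fin 2), π⁻¹ * Real.exp (-‖x - y‖ ^ 2) * f y) :
    ∃ c : ℝ, ∀ x, f x = c := by
  obtain ⟨C, hC⟩ := hbdd
  have hK : ∀ u : EuclideanSpace ℝ (Fin 2), gaussianKernel 1 u = π⁻¹ * rexp (-‖u‖ ^ 2) := by
    simp [gaussianKernel]
  have hfix₁ : f ⋆[mul ℝ ℝ] gaussianKernel 1 = f := by
    funext x
    rw [convolution_def, hfix x]
    congr 1 with y
    rw [mul_apply', hK, mul_comm]
  have hlim : Tendsto (fun n : ℕ => 1 / (n + 1 : ℝ)) atTop (𝓝[>] 0) :=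
    tendsto_nhdsWithin_iff.mpr
      ⟨tendsto_one_div_add_atTop_nhds_zero_nat,
        .of_forall fun n => Set.mem_Ioi.mpr (by positivity)⟩
  refine ⟨f 0, fun x => eq_of_forall_convolution_eq_self hcont.aestronglyMeasurable hC
    (fun n : ℕ => integrable_gaussianKernel (a := 1 / (n + 1 : ℝ)) (by positivity))
    (convolution_gaussianKernel_one_div_succ_eq_self hcont.aestronglyMeasurable hC hfix₁)
    (fun v => (tendsto_integral_abs_gaussianKernel_add_sub v).comp hlim) x 0⟩
end

section
/- Let H be a separable complex Hilbert space, (Ω, 𝒜) a standard Borel space, μ a measure on (Ω, 𝒜), and T : B(H) → L^∞(Ω, μ; ℂ) a positive linear map with T(1) = 1 (the constant-one class). Let D ⊆ B(H) be a norm-closed, norm-separable linear subspace closed under taking adjoints, and let C be a countable dense subset of D. Then there exist a μ-null set N ∈ 𝒜, for each A ∈ C a measurable representative f_A : Ω → ℂ of the equivalence class T(A), and for each λ ∈ Ω ∖ N a state ω_λ on B(H), such that f_A(λ) = ω_λ(A) for every A ∈ C and every λ ∈ Ω ∖ N. -/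
open MeasureTheory
open scoped ComplexInnerProductSpace ComplexOrder

/-! Positivity and `T 1 = 1` give `re (T a x) ≤ ‖a‖` for almost every `x`: for self-adjoint `a`
because `a ≤ ‖a‖ • 1`, and in general through `a = ℜ a + i ℑ a`. Almost every point satisfies this
simultaneously for all finite combinations of elements of `{1} ∪ C` with coefficients from a
countable dense set, hence by continuity for all complex coefficients. At such a point `x` the
values `f_A(x)` define a functional of norm at most one on the span of `{1} ∪ C`, which
Hahn–Banach extends to `B(H)`. In a unital C⋆-algebra a functional of norm at most one with
`ψ 1 = 1` is positive, by the C⋆-identity `‖b + i t‖² = ‖b² + t²‖` for self-adjoint `b`. -/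

section State
variable {A : Type*} [CStarAlgebra A]

open Complex in
lemma IsSelfAdjoint.norm_add_I_smul_one_sq_le [Nontrivial A] {b : A} (hb : IsSelfAdjoint b)
    (t : ℝ) : ‖b + (t * I) • (1 : A)‖ ^ 2 ≤ ‖b‖ ^ 2 + t ^ 2 := by
  have hstar : star (b + (t * I) • (1 : A)) = b - (t * I) • 1 := by
    simp [star_smul, hb.star_eq, sub_eq_add_neg]
  have hmul : star (b + (t * I) • (1 : A)) * (b + (t * I) • 1) =
      b * b + ((t ^ 2 : ℝ) : ℂ) • 1 := by
    have ht : ((t ^ 2 : ℝ) : ℂ) = -((t * I) * (t * I)) := by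
      push_cast; ring_nf; rw [I_sq]; ring
    rw [hstar, ht]
    simp only [sub_mul, mul_add, mul_smul_comm, smul_mul_assoc, one_mul, mul_one]
    module
  rw [sq, ← CStarRing.norm_star_mul_self, hmul]
  calc ‖b * b + ((t ^ 2 : ℝ) : ℂ) • (1 : A)‖ ≤ ‖b‖ * ‖b‖ + t ^ 2 := by
        refine (norm_add_le _ _).trans (add_le_add (norm_mul_le _ _) ?_)
        simp [norm_smul]
    _ = ‖b‖ ^ 2 + t ^ 2 := by ring

lemma StrongDual.im_apply_eq_zero_of_isSelfAdjoint {ψ : StrongDual ℂ A} (hψ : ‖ψ‖ ≤ 1)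
    (h1 : ψ 1 = 1) {b : A} (hb : IsSelfAdjoint b) : (ψ b).im = 0 := by
  have : Nontrivial A := ⟨1, 0, fun h => by simp [h] at h1⟩
  have hbound : ∀ t : ℝ, 2 * t * (ψ b).im ≤ ‖b‖ ^ 2 := fun t => by
    have h := (ψ.le_of_opNorm_le hψ (b + (t * Complex.I) • 1)).trans_eq (one_mul _)
    rw [map_add, map_smul, h1, smul_eq_mul, mul_one] at h
    have h2 := (pow_le_pow_left₀ (norm_nonneg _) h 2).trans (hb.norm_add_I_smul_one_sq_le t)
    rw [← Complex.normSq_eq_norm_sq, Complex.normSq_apply] at h2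
    simp only [Complex.add_re, Complex.add_im, Complex.mul_re, Complex.mul_im, Complex.ofReal_re,
      Complex.ofReal_im, Complex.I_re, Complex.I_im, mul_zero, mul_one, sub_self, add_zero] at h2
    nlinarith [sq_nonneg (ψ b).re, sq_nonneg (ψ b).im]
  by_contra hne
  have := hbound ((‖b‖ ^ 2 + 1) / (2 * (ψ b).im))
  rw [show 2 * ((‖b‖ ^ 2 + 1) / (2 * (ψ b).im)) * (ψ b).im = ‖b‖ ^ 2 + 1 by field_simp] at this
  linarith

lemma StrongDual.nonneg_apply_of_norm_le_one [PartialOrder A] [StarOrderedRing A]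
    {ψ : StrongDual ℂ A} (hψ : ‖ψ‖ ≤ 1) (h1 : ψ 1 = 1) {a : A} (ha : 0 ≤ a) : 0 ≤ ψ a := by
  have : Nontrivial A := ⟨1, 0, fun h => by simp [h] at h1⟩
  have hre : ‖(‖a‖ : ℂ) - ψ a‖ ≤ ‖a‖ := by
    have hle : 0 ≤ algebraMap ℝ A ‖a‖ - a :=
      sub_nonneg.mpr (IsSelfAdjoint.of_nonneg ha).le_algebraMap_norm_self
    have hnorm : ‖algebraMap ℝ A ‖a‖ - a‖ ≤ ‖a‖ := by
      refine (CStarAlgebra.norm_le_norm_of_nonneg_of_le hle (sub_le_self _ ha)).trans_eq ?_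
      simp
    have := (ψ.le_of_opNorm_le hψ (algebraMap ℝ A ‖a‖ - a)).trans ((one_mul _).trans_le hnorm)
    simpa [Algebra.algebraMap_eq_smul_one, h1] using this
  have him := ψ.im_apply_eq_zero_of_isSelfAdjoint hψ h1 (IsSelfAdjoint.of_nonneg ha)
  rw [Complex.nonneg_iff]
  refine ⟨?_, him.symm⟩
  rw [← Complex.re_add_im (ψ a), him] at hre
  simp only [add_zero, zero_mul, Complex.ofReal_zero] at hre
  rw [← Complex.ofReal_sub, Complex.norm_real, Real.norm_eq_abs, abs_le] at hre
  linarith [hre.2]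

end State

section Extension
variable {𝕜 V E : Type*} [RCLike 𝕜] [AddCommGroup V] [Module 𝕜 V] [SeminormedAddCommGroup E]
  [NormedSpace 𝕜 E]

open ComplexConjugate in
lemma LinearMap.norm_apply_le_of_forall_re_apply_le {L : V →ₗ[𝕜] 𝕜} {M : V →ₗ[𝕜] E}
    (h : ∀ c, RCLike.re (L c) ≤ ‖M c‖) (c : V) : ‖L c‖ ≤ ‖M c‖ := by
  have hrot := h (conj (L c) • c)
  rw [L.map_smul, M.map_smul, smul_eq_mul, RCLike.conj_mul, norm_smul, RCLike.norm_conj,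
    ← RCLike.ofReal_pow, RCLike.ofReal_re] at hrot
  nlinarith [norm_nonneg (L c), norm_nonneg (M c)]

lemma LinearMap.exists_strongDual_comp_eq_of_norm_le {L : V →ₗ[𝕜] 𝕜} {M : V →ₗ[𝕜] E}
    (h : ∀ c, ‖L c‖ ≤ ‖M c‖) : ∃ ψ : StrongDual 𝕜 E, ‖ψ‖ ≤ 1 ∧ ∀ c, ψ (M c) = L c := by
  have hker : ker M ≤ ker L := fun c hc => by simpa [mem_ker.mp hc] using h c
  let L₀ : range M →ₗ[𝕜] 𝕜 := (ker M).liftQ L hker ∘ₗ M.quotKerEquivRange.symm.toLinearMap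
  have hL₀ : ∀ c, L₀ ⟨M c, mem_range_self M c⟩ = L c := fun c => by
    simp [L₀, quotKerEquivRange_symm_apply_image]
  have hL₀_le : ∀ y : range M, ‖L₀ y‖ ≤ 1 * ‖y‖ := by
    rintro ⟨_, c, rfl⟩
    rw [hL₀, one_mul]
    exact h c
  obtain ⟨ψ, hψ, hψ_norm⟩ := exists_extension_norm_eq (range M) (L₀.mkContinuous 1 hL₀_le)
  refine ⟨ψ, hψ_norm ▸ L₀.mkContinuous_norm_le zero_le_one hL₀_le, fun c => ?_⟩
  rw [← hL₀]
  exact hψ ⟨M c, mem_range_self M c⟩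

end Extension

section Representation
variable {𝕜 Ω E ι : Type*} [RCLike 𝕜] [MeasurableSpace Ω] {μ : Measure Ω} {p : ENNReal}
  [SeminormedAddCommGroup E] [NormedSpace 𝕜 E] [Countable ι]

lemma ae_forall_re_linearCombination_le {F : E →ₗ[𝕜] Lp 𝕜 p μ}
    (hF : ∀ a, ∀ᵐ x ∂μ, RCLike.re (F a x) ≤ ‖a‖) (v : ι → E) {g : ι → Ω → 𝕜}
    (hg : ∀ i, g i =ᵐ[μ] F (v i)) :
    ∀ᵐ x ∂μ, ∀ c : ι →₀ 𝕜,
      RCLike.re (Finsupp.linearCombination 𝕜 (g · x) c) ≤ ‖Finsupp.linearCombination 𝕜 v c‖ := by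
  obtain ⟨Q, hQ_count, hQ_dense⟩ := TopologicalSpace.exists_countable_dense (ι → 𝕜)
  have : Countable Q := hQ_count.to_subtype
  have hsum : ∀ᵐ x ∂μ, ∀ (s : Finset ι) (d : Q),
      RCLike.re (∑ i ∈ s, (d : ι → 𝕜) i * g i x) ≤ ‖∑ i ∈ s, (d : ι → 𝕜) i • v i‖ := by
    refine ae_all_iff.2 fun s => ae_all_iff.2 fun ⟨d, _⟩ => ?_
    have hsmul : ∀ᵐ x ∂μ, ∀ i, ((d i • F (v i) : Lp 𝕜 p μ) : Ω → 𝕜) x = d i * g i x :=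
      ae_all_iff.2 fun i => by
        filter_upwards [Lp.coeFn_smul (d i) (F (v i)), hg i] with x hx hgx
        rw [hx, Pi.smul_apply, hgx, smul_eq_mul]
    filter_upwards [hF (∑ i ∈ s, d i • v i), Lp.coeFn_fun_finsetSum s (fun i => d i • F (v i)),
      hsmul] with x hx hFsum hsmul
    rw [map_sum, Finset.sum_congr rfl fun i _ => F.map_smul (d i) (v i), hFsum] at hx
    simpa only [hsmul] using hx
  filter_upwards [hsum] with x hx c
  have hclosed : IsClosed {d : ι → 𝕜 | RCLike.re (∑ i ∈ c.support, d i * g i x)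
      ≤ ‖∑ i ∈ c.support, d i • v i‖} :=
    isClosed_le (by fun_prop) (by fun_prop)
  have := hclosed.closure_subset_iff.2 (fun d hd => hx c.support ⟨d, hd⟩) (hQ_dense c)
  simpa [Finsupp.linearCombination_apply, Finsupp.sum] using this

lemma ae_exists_strongDual_apply_eq {F : E →ₗ[𝕜] Lp 𝕜 p μ}
    (hF : ∀ a, ∀ᵐ x ∂μ, RCLike.re (F a x) ≤ ‖a‖) (v : ι → E) {g : ι → Ω → 𝕜}
    (hg : ∀ i, g i =ᵐ[μ] F (v i)) :
    ∀ᵐ x ∂μ, ∃ ψ : StrongDual 𝕜 E, ‖ψ‖ ≤ 1 ∧ ∀ i, ψ (v i) = g i x := by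
  filter_upwards [ae_forall_re_linearCombination_le hF v hg] with x hx
  obtain ⟨ψ, hψ, hψv⟩ := LinearMap.exists_strongDual_comp_eq_of_norm_le
    (LinearMap.norm_apply_le_of_forall_re_apply_le hx)
  refine ⟨ψ, hψ, fun i => ?_⟩
  simpa using hψv (Finsupp.single i 1)

end Representation

section PositiveUnital
variable {A Ω : Type*} [CStarAlgebra A] [PartialOrder A] [StarOrderedRing A] [MeasurableSpace Ω]
  {μ : Measure Ω} {p : ENNReal} {T : A →ₗ[ℂ] Lp ℂ p μ}

lemma ae_apply_le_norm_of_isSelfAdjoint (hTpos : ∀ a, 0 ≤ a → ∀ᵐ x ∂μ, 0 ≤ T a x)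
    (hT1 : T 1 =ᵐ[μ] fun _ => 1) {a : A} (ha : IsSelfAdjoint a) :
    ∀ᵐ x ∂μ, T a x ≤ ‖a‖ := by
  have hpos := hTpos _ (sub_nonneg.mpr ha.le_algebraMap_norm_self)
  rw [map_sub, Algebra.algebraMap_eq_smul_one, LinearMap.map_smul_of_tower] at hpos
  filter_upwards [hpos, Lp.coeFn_sub (‖a‖ • T 1) (T a), Lp.coeFn_smul ‖a‖ (T 1), hT1]
    with x hx hsub hsmul h1
  rw [hsub, Pi.sub_apply, hsmul, Pi.smul_apply, h1, sub_nonneg] at hx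
  simpa using hx

lemma ae_re_apply_le_norm (hTpos : ∀ a, 0 ≤ a → ∀ᵐ x ∂μ, 0 ≤ T a x)
    (hT1 : T 1 =ᵐ[μ] fun _ => 1) (a : A) :
    ∀ᵐ x ∂μ, (T a x).re ≤ ‖a‖ := by
  have hdecomp : T a = T (realPart a) + Complex.I • T (imaginaryPart a) := by
    conv_lhs => rw [← realPart_add_I_smul_imaginaryPart a]
    rw [map_add, map_smul]
  filter_upwards [ae_apply_le_norm_of_isSelfAdjoint hTpos hT1 (realPart a).2,
    ae_apply_le_norm_of_isSelfAdjoint hTpos hT1 (imaginaryPart a).2,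
    Lp.coeFn_add (T (realPart a)) (Complex.I • T (imaginaryPart a)),
    Lp.coeFn_smul Complex.I (T (imaginaryPart a))] with x hre him hadd hsmul
  rw [Complex.le_def] at hre him
  rw [hdecomp, hadd, Pi.add_apply, hsmul, Pi.smul_apply, smul_eq_mul, Complex.add_re,
    Complex.I_mul_re, him.2]
  simpa using hre.1.trans (realPart.norm_le a)

end PositiveUnital

theorem stmt7_general {H : Type*} [NormedAddCommGroup H] [InnerProductSpace ℂ H] [CompleteSpace H]
    {Ω : Type*} [MeasurableSpace Ω] (μ : Measure Ω)
    (T : (H →L[ℂ] H) →ₗ[ℂ] Lp ℂ ⊤ μ)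
    (hTpos : ∀ A : H →L[ℂ] H, A.IsPositive → ∀ᵐ x ∂μ, 0 ≤ (T A : Ω → ℂ) x)
    (hT1 : (T 1 : Ω → ℂ) =ᵐ[μ] fun _ => 1)
    (C : Set (H →L[ℂ] H)) (hCcount : C.Countable) :
    ∃ N : Set Ω, MeasurableSet N ∧ μ N = 0 ∧
      ∃ f : (H →L[ℂ] H) → Ω → ℂ,
        (∀ A ∈ C, Measurable (f A) ∧ f A =ᵐ[μ] (T A : Ω → ℂ)) ∧
        ∃ ω : Ω → ((H →L[ℂ] H) →ₗ[ℂ] ℂ),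
          (∀ x, x ∉ N →
            (∀ A : H →L[ℂ] H, A.IsPositive → 0 ≤ ω x A) ∧ ω x 1 = 1) ∧
          ∀ A ∈ C, ∀ x, x ∉ N → f A x = ω x A := by
  have hTpos' : ∀ A, 0 ≤ A → ∀ᵐ x ∂μ, 0 ≤ T A x :=
    fun A hA => hTpos A ((ContinuousLinearMap.nonneg_iff_isPositive A).1 hA)
  let f : (H →L[ℂ] H) → Ω → ℂ := fun A => (Lp.aestronglyMeasurable (T A)).mk (T A)
  have hf : ∀ A, f A =ᵐ[μ] T A := fun A => (Lp.aestronglyMeasurable (T A)).ae_eq_mk.symm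
  have hf_meas : ∀ A, Measurable (f A) :=
    fun A => (Lp.aestronglyMeasurable (T A)).stronglyMeasurable_mk.measurable
  have : Countable ↥(insert 1 C) := (hCcount.insert 1).to_subtype
  have hgood : ∀ᵐ x ∂μ, f 1 x = 1 ∧ ∃ ψ : StrongDual ℂ (H →L[ℂ] H),
      ‖ψ‖ ≤ 1 ∧ ∀ A : ↥(insert 1 C), ψ A = f A x :=
    ((hf 1).trans hT1).and <| ae_exists_strongDual_apply_eq (ae_re_apply_le_norm hTpos' hT1)
      Subtype.val fun A => hf A
  obtain ⟨N, hN_bad, hN_meas, hN_null⟩ := exists_measurable_superset_of_null (ae_iff.1 hgood)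
  have hstate : ∀ x, ∃ ψ : StrongDual ℂ (H →L[ℂ] H), x ∉ N →
      (∀ A : H →L[ℂ] H, A.IsPositive → 0 ≤ ψ A) ∧ ψ 1 = 1 ∧ ∀ A ∈ C, ψ A = f A x := by
    intro x
    by_cases hx : x ∈ N
    · exact ⟨0, fun h => (h hx).elim⟩
    obtain ⟨h1, ψ, hψ, hψf⟩ := not_not.1 fun h => hx (hN_bad h)
    have hψ1 : ψ 1 = 1 := (hψf ⟨1, Set.mem_insert 1 C⟩).trans h1
    refine ⟨ψ, fun _ => ⟨fun A hA => ψ.nonneg_apply_of_norm_le_one hψ hψ1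
      ((ContinuousLinearMap.nonneg_iff_isPositive A).2 hA), hψ1,
      fun A hA => hψf ⟨A, Set.mem_insert_of_mem 1 hA⟩⟩⟩
  choose ω hω using hstate
  exact ⟨N, hN_meas, hN_null, f, fun A _ => ⟨hf_meas A, hf A⟩, fun x => (ω x).toLinearMap,
    fun x hx => ⟨(hω x hx).1, (hω x hx).2.1⟩, fun A hA x hx => ((hω x hx).2.2 A hA).symm⟩

/-- Given a positive unital linear map `T : B(H) → L^∞(Ω, μ; ℂ)` and a norm-closed,
norm-separable, adjoint-closed subspace `D ⊆ B(H)` with countable dense subset `C`,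
there are a `μ`-null set `N`, measurable representatives `f_A` of the classes `T(A)`
for `A ∈ C`, and states `ω_λ` on `B(H)` for `λ ∉ N`, with `f_A(λ) = ω_λ(A)` for all
`A ∈ C` and `λ ∉ N`. -/
theorem stmt7 {H : Type*} [NormedAddCommGroup H] [InnerProductSpace ℂ H] [CompleteSpace H]
    [TopologicalSpace.SeparableSpace H]
    {Ω : Type*} [MeasurableSpace Ω] [StandardBorelSpace Ω] (μ : Measure Ω)
    (T : (H →L[ℂ] H) →ₗ[ℂ] Lp ℂ ⊤ μ)
    (hTpos : ∀ A : H →L[ℂ] H, A.IsPositive → ∀ᵐ x ∂μ, 0 ≤ (T A : Ω → ℂ) x)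
    (hT1 : (T 1 : Ω → ℂ) =ᵐ[μ] fun _ => 1)
    (D : Submodule ℂ (H →L[ℂ] H))
    (hDclosed : IsClosed (D : Set (H →L[ℂ] H)))
    (hDsep : TopologicalSpace.IsSeparable (D : Set (H →L[ℂ] H)))
    (hDadj : ∀ A ∈ D, ContinuousLinearMap.adjoint A ∈ D)
    (C : Set (H →L[ℂ] H)) (hCcount : C.Countable) (hCD : C ⊆ D)
    (hCdense : (D : Set (H →L[ℂ] H)) ⊆ closure C) :
    ∃ N : Set Ω, MeasurableSet N ∧ μ N = 0 ∧
      ∃ f : (H →L[ℂ] H) → Ω → ℂ,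
        (∀ A ∈ C, Measurable (f A) ∧ f A =ᵐ[μ] (T A : Ω → ℂ)) ∧
        ∃ ω : Ω → ((H →L[ℂ] H) →ₗ[ℂ] ℂ),
          (∀ x, x ∉ N →
            (∀ A : H →L[ℂ] H, A.IsPositive → 0 ≤ ω x A) ∧ ω x 1 = 1) ∧
          ∀ A ∈ C, ∀ x, x ∉ N → f A x = ω x A :=
  stmt7_general μ T hTpos hT1 C hCcount
end

section
/- Let H be a complex Hilbert space, (Ω, 𝒜) a standard Borel space, μ a measure on (Ω, 𝒜), and let E(H) = {E ∈ B(H) : 0 ≤ E ≤ 1} be the set of effects. Let T : E(H) → L^∞(Ω, μ; ℝ) be a map satisfying: (1) T(1) = 1 (the constant-one class); (2) T(E + F) = T(E) + T(F) whenever E, F ∈ E(H) and E + F ≤ 1; (3) T(t·E) = t·T(E) for all real t with 0 ≤ t ≤ 1 and all E ∈ E(H); (4) 0 ≤ T(E) ≤ 1 μ-a.e. for all E ∈ E(H). Then there exists a ℂ-linear map T̃ : B(H) → L^∞(Ω, μ; ℂ) that is positive (it maps every positive operator to the class of a μ-a.e. nonnegative real-valued function), satisfies T̃(1) = 1, and extends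 T, i.e., T̃(E) = T(E) for every effect E ∈ E(H). -/
/-!
On effects `T` is additive and `[0,1]`-homogeneous, so `a ↦ c • T (c⁻¹ • a)` does not
depend on the scale `c ≥ ‖a‖` and defines an additive, `ℝ≥0`-homogeneous extension `S` of `T`
to the positive cone. Since `S p - S q` then depends only on `p - q`, the Jordan decomposition
`a = a⁺ - a⁻` turns `S` into a real-linear map `L` on the self-adjoint part, and
`a ↦ L (ℜ a) + I • L (ℑ a)` makes it `ℂ`-linear. Positivity of the extension is inherited
from `0 ≤ T E` on effects.
-/

open MeasureTheory
open scoped ComplexInnerProductSpace ComplexOrder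

def IsEffect {H : Type*} [NormedAddCommGroup H] [InnerProductSpace ℂ H] [CompleteSpace H]
    (E : H →L[ℂ] H) : Prop :=
  E.IsPositive ∧ (1 - E).IsPositive

lemma isEffect_iff_mem_Icc {H : Type*} [NormedAddCommGroup H] [InnerProductSpace ℂ H]
    [CompleteSpace H] {E : H →L[ℂ] H} : IsEffect E ↔ E ∈ Set.Icc 0 1 := by
  rw [IsEffect, Set.mem_Icc, ContinuousLinearMap.nonneg_iff_isPositive, ContinuousLinearMap.le_def]

section complexify

open ComplexStarModule Complex

variable {A : Type*} [AddCommGroup A] [Module ℂ A] [StarAddMonoid A] [StarModule ℂ A]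
  {N : Type*} [AddCommGroup N] [Module ℂ N] [Module ℝ N] [IsScalarTower ℝ ℂ N]

noncomputable def selfAdjoint.complexify (L : selfAdjoint A →ₗ[ℝ] N) : A →ₗ[ℂ] N where
  toFun a := L (ℜ a) + I • L (ℑ a)
  map_add' a b := by
    simp only [map_add, smul_add]
    abel
  map_smul' z a := by
    rw [realPart_smul, imaginaryPart_smul, map_sub, map_add, map_smul, map_smul, map_smul,
      map_smul, RingHom.id_apply]
    match_scalars <;> simp [Complex.ext_iff]

lemma selfAdjoint.complexify_apply_coe (L : selfAdjoint A →ₗ[ℝ] N) (a : selfAdjoint A) :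
    selfAdjoint.complexify L a = L a := by
  simp [selfAdjoint.complexify, selfAdjoint.realPart_coe, selfAdjoint.imaginaryPart_coe]

end complexify

namespace CStarAlgebra

section posExt

variable {A : Type*} [CStarAlgebra A] [PartialOrder A] {M : Type*} [AddCommGroup M] [Module ℝ M]
  {T : A → M}

/-- The `+ 1` keeps the scale positive at `a = 0`. -/
noncomputable def posExt (T : A → M) (a : A) : M :=
  (‖a‖ + 1) • T ((‖a‖ + 1)⁻¹ • a)

lemma posExt_of_mem_Icc
    (hsmul : ∀ t ∈ Set.Icc (0 : ℝ) 1, ∀ a ∈ Set.Icc (0 : A) 1, T (t • a) = t • T a)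
    {a : A} (ha : a ∈ Set.Icc 0 1) : posExt T a = T a := by
  have hpos : 0 < ‖a‖ + 1 := by positivity
  have hscale : (‖a‖ + 1)⁻¹ ∈ Set.Icc (0 : ℝ) 1 :=
    ⟨by positivity, inv_le_one_of_one_le₀ (by linarith [norm_nonneg a])⟩
  rw [posExt, hsmul _ hscale a ha, smul_smul, mul_inv_cancel₀ hpos.ne', one_smul]

variable [StarOrderedRing A]

lemma inv_smul_mem_Icc {a : A} (ha : 0 ≤ a) {c : ℝ} (hc : 0 < c) (hac : ‖a‖ ≤ c) :
    c⁻¹ • a ∈ Set.Icc 0 1 := by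
  refine mem_Icc_iff_norm_le_one.2 ⟨smul_nonneg (inv_nonneg.2 hc.le) ha, ?_⟩
  rw [norm_smul, Real.norm_of_nonneg (inv_nonneg.2 hc.le)]
  exact inv_mul_le_one_of_le₀ hac hc.le

lemma smul_apply_inv_smul_eq_of_le
    (hsmul : ∀ t ∈ Set.Icc (0 : ℝ) 1, ∀ a ∈ Set.Icc (0 : A) 1, T (t • a) = t • T a)
    {a : A} (ha : 0 ≤ a) {c d : ℝ} (hc : 0 < c) (hcd : c ≤ d)
    (hac : ‖a‖ ≤ c) : d • T (d⁻¹ • a) = c • T (c⁻¹ • a) := by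
  have hd : 0 < d := hc.trans_le hcd
  have hscale : d⁻¹ • a = (c / d) • c⁻¹ • a := by
    rw [smul_smul]
    congr 1
    field_simp
  rw [hscale, hsmul _ ⟨by positivity, div_le_one_of_le₀ hcd hd.le⟩ _
      (inv_smul_mem_Icc ha hc hac), smul_smul, mul_div_cancel₀ _ hd.ne']

lemma posExt_eq_smul
    (hsmul : ∀ t ∈ Set.Icc (0 : ℝ) 1, ∀ a ∈ Set.Icc (0 : A) 1, T (t • a) = t • T a)
    {a : A} (ha : 0 ≤ a) {c : ℝ} (hc : 0 < c) (hac : ‖a‖ ≤ c) :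
    posExt T a = c • T (c⁻¹ • a) := by
  rcases le_total c (‖a‖ + 1) with h | h
  · exact smul_apply_inv_smul_eq_of_le hsmul ha hc h hac
  · exact (smul_apply_inv_smul_eq_of_le hsmul ha (by positivity) h (by linarith)).symm

lemma posExt_smul
    (hsmul : ∀ t ∈ Set.Icc (0 : ℝ) 1, ∀ a ∈ Set.Icc (0 : A) 1, T (t • a) = t • T a)
    {a : A} (ha : 0 ≤ a) {r : ℝ} (hr : 0 ≤ r) :
    posExt T (r • a) = r • posExt T a := by
  rcases hr.eq_or_lt with rfl | hr
  · have hT0 : T 0 = 0 := by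
      simpa using hsmul 0 ⟨le_rfl, zero_le_one⟩ 0 ⟨le_rfl, zero_le_one⟩
    simp [posExt, hT0]
  · have hpos : 0 < ‖a‖ + 1 := by positivity
    have hnorm : ‖r • a‖ ≤ r * (‖a‖ + 1) := by
      rw [norm_smul, Real.norm_of_nonneg hr.le]
      gcongr
      linarith
    rw [posExt_eq_smul hsmul (smul_nonneg hr.le ha) (by positivity) hnorm, posExt, smul_smul,
      mul_inv_rev, mul_assoc, inv_mul_cancel₀ hr.ne', mul_one, mul_smul]

lemma posExt_add
    (hsmul : ∀ t ∈ Set.Icc (0 : ℝ) 1, ∀ a ∈ Set.Icc (0 : A) 1, T (t • a) = t • T a)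
    (hadd : ∀ a b : A, 0 ≤ a → 0 ≤ b → a + b ≤ 1 → T (a + b) = T a + T b)
    {a b : A} (ha : 0 ≤ a) (hb : 0 ≤ b) : posExt T (a + b) = posExt T a + posExt T b := by
  set c := ‖a‖ + ‖b‖ + 1
  have hc : 0 < c := by positivity
  have hab : ‖a + b‖ ≤ c := (norm_add_le a b).trans (by linarith)
  have hsum := inv_smul_mem_Icc (add_nonneg ha hb) hc hab
  rw [smul_add] at hsum
  rw [posExt_eq_smul hsmul (add_nonneg ha hb) hc hab,
    posExt_eq_smul hsmul ha hc (by linarith [norm_nonneg b]),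
    posExt_eq_smul hsmul hb hc (by linarith [norm_nonneg a]), smul_add,
    hadd _ _ (smul_nonneg (inv_nonneg.2 hc.le) ha) (smul_nonneg (inv_nonneg.2 hc.le) hb) hsum.2,
    smul_add]

end posExt

section jordanExt

variable {A : Type*} [CStarAlgebra A] [PartialOrder A] [StarOrderedRing A] {M : Type*}
  [AddCommGroup M] {S : A → M}

noncomputable def jordanExt (S : A → M) (a : A) : M :=
  S a⁺ - S a⁻

lemma jordanExt_sub (hadd : ∀ a b : A, 0 ≤ a → 0 ≤ b → S (a + b) = S a + S b)
    {p q : A} (hp : 0 ≤ p) (hq : 0 ≤ q) : jordanExt S (p - q) = S p - S q := by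
  have hsa : IsSelfAdjoint (p - q) := (IsSelfAdjoint.of_nonneg hp).sub (.of_nonneg hq)
  have hdecomp : (p - q)⁺ + q = p + (p - q)⁻ := by
    rw [← sub_eq_sub_iff_add_eq_add, CFC.posPart_sub_negPart _ hsa]
  have := congrArg S hdecomp
  rw [hadd _ _ (CFC.posPart_nonneg _) hq, hadd _ _ hp (CFC.negPart_nonneg _)] at this
  rw [jordanExt, sub_eq_sub_iff_add_eq_add, this]

lemma jordanExt_of_nonneg (hadd : ∀ a b : A, 0 ≤ a → 0 ≤ b → S (a + b) = S a + S b)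
    {a : A} (ha : 0 ≤ a) : jordanExt S a = S a := by
  have hS0 : S 0 = 0 := by simpa using hadd 0 0 le_rfl le_rfl
  simpa [hS0] using jordanExt_sub hadd ha le_rfl

lemma jordanExt_add (hadd : ∀ a b : A, 0 ≤ a → 0 ≤ b → S (a + b) = S a + S b)
    {a b : A} (ha : IsSelfAdjoint a) (hb : IsSelfAdjoint b) :
    jordanExt S (a + b) = jordanExt S a + jordanExt S b := by
  have hdecomp : a + b = (a⁺ + b⁺) - (a⁻ + b⁻) := by
    rw [add_sub_add_comm, CFC.posPart_sub_negPart a ha, CFC.posPart_sub_negPart b hb]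
  rw [hdecomp, jordanExt_sub hadd (add_nonneg (CFC.posPart_nonneg _) (CFC.posPart_nonneg _))
      (add_nonneg (CFC.negPart_nonneg _) (CFC.negPart_nonneg _)),
    hadd _ _ (CFC.posPart_nonneg _) (CFC.posPart_nonneg _),
    hadd _ _ (CFC.negPart_nonneg _) (CFC.negPart_nonneg _), jordanExt, jordanExt]
  abel

variable [Module ℝ M]

lemma jordanExt_smul (hadd : ∀ a b : A, 0 ≤ a → 0 ≤ b → S (a + b) = S a + S b)
    (hsmul : ∀ r : ℝ, 0 ≤ r → ∀ a : A, 0 ≤ a → S (r • a) = r • S a)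
    {a : A} (ha : IsSelfAdjoint a) (r : ℝ) : jordanExt S (r • a) = r • jordanExt S a := by
  have hdecomp := CFC.posPart_sub_negPart a ha
  rcases le_total 0 r with hr | hr
  · have hra : r • a = r • a⁺ - r • a⁻ := by rw [← smul_sub, hdecomp]
    rw [hra, jordanExt_sub hadd (smul_nonneg hr (CFC.posPart_nonneg _))
      (smul_nonneg hr (CFC.negPart_nonneg _)), hsmul r hr _ (CFC.posPart_nonneg _),
      hsmul r hr _ (CFC.negPart_nonneg _), jordanExt, smul_sub]
  · have hr' : 0 ≤ -r := neg_nonneg.2 hr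
    have hra : r • a = (-r) • a⁻ - (-r) • a⁺ := by
      rw [← smul_sub, ← neg_sub, hdecomp, smul_neg, neg_smul, neg_neg]
    rw [hra, jordanExt_sub hadd (smul_nonneg hr' (CFC.negPart_nonneg _))
        (smul_nonneg hr' (CFC.posPart_nonneg _)), hsmul _ hr' _ (CFC.negPart_nonneg _),
      hsmul _ hr' _ (CFC.posPart_nonneg _), jordanExt, neg_smul, neg_smul, smul_sub]
    abel

noncomputable def jordanExtₗ (hadd : ∀ a b : A, 0 ≤ a → 0 ≤ b → S (a + b) = S a + S b)
    (hsmul : ∀ r : ℝ, 0 ≤ r → ∀ a : A, 0 ≤ a → S (r • a) = r • S a) :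
    selfAdjoint A →ₗ[ℝ] M where
  toFun a := jordanExt S a
  map_add' a b := jordanExt_add hadd a.2 b.2
  map_smul' r a := jordanExt_smul hadd hsmul a.2 r

lemma jordanExtₗ_apply_of_nonneg
    (hadd : ∀ a b : A, 0 ≤ a → 0 ≤ b → S (a + b) = S a + S b)
    (hsmul : ∀ r : ℝ, 0 ≤ r → ∀ a : A, 0 ≤ a → S (r • a) = r • S a)
    {a : A} (ha : 0 ≤ a) :
    jordanExtₗ hadd hsmul ⟨a, .of_nonneg ha⟩ = S a :=
  jordanExt_of_nonneg hadd ha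

end jordanExt

section effectExtension

variable {A : Type*} [CStarAlgebra A] [PartialOrder A] [StarOrderedRing A]
  {M : Type*} [AddCommGroup M] [Module ℝ M] {T : A → M}
  {N : Type*} [AddCommGroup N] [Module ℂ N] [Module ℝ N] [IsScalarTower ℝ ℂ N]

noncomputable def effectExtension (ι : M →ₗ[ℝ] N)
    (hsmul : ∀ t ∈ Set.Icc (0 : ℝ) 1, ∀ a ∈ Set.Icc (0 : A) 1, T (t • a) = t • T a)
    (hadd : ∀ a b : A, 0 ≤ a → 0 ≤ b → a + b ≤ 1 → T (a + b) = T a + T b) : A →ₗ[ℂ] N :=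
  selfAdjoint.complexify <| ι ∘ₗ jordanExtₗ (fun _ _ ha hb => posExt_add hsmul hadd ha hb)
    (fun _ hr _ ha => posExt_smul hsmul ha hr)

variable (ι : M →ₗ[ℝ] N)
  (hsmul : ∀ t ∈ Set.Icc (0 : ℝ) 1, ∀ a ∈ Set.Icc (0 : A) 1, T (t • a) = t • T a)
  (hadd : ∀ a b : A, 0 ≤ a → 0 ≤ b → a + b ≤ 1 → T (a + b) = T a + T b)

lemma effectExtension_apply_of_nonneg {a : A} (ha : 0 ≤ a) :
    effectExtension ι hsmul hadd a = ι (posExt T a) :=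
  (selfAdjoint.complexify_apply_coe _ ⟨a, .of_nonneg ha⟩).trans
    (congrArg ι (jordanExtₗ_apply_of_nonneg _ _ ha))

lemma effectExtension_apply_of_mem_Icc {a : A} (ha : a ∈ Set.Icc 0 1) :
    effectExtension ι hsmul hadd a = ι (T a) := by
  rw [effectExtension_apply_of_nonneg ι hsmul hadd ha.1, posExt_of_mem_Icc hsmul ha]

end effectExtension

end CStarAlgebra


open CStarAlgebra in
theorem stmt8_general {H : Type*} [NormedAddCommGroup H] [InnerProductSpace ℂ H] [CompleteSpace H]
    {Ω : Type*} [MeasurableSpace Ω] (μ : Measure Ω)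
    (T : (H →L[ℂ] H) → Lp ℝ ⊤ μ)
    (hT1 : (T 1 : Ω → ℝ) =ᵐ[μ] fun _ => 1)
    (hTadd : ∀ E F : H →L[ℂ] H, IsEffect E → IsEffect F → (1 - (E + F)).IsPositive →
      T (E + F) = T E + T F)
    (hTsmul : ∀ t : ℝ, 0 ≤ t → t ≤ 1 → ∀ E : H →L[ℂ] H, IsEffect E →
      T ((t : ℂ) • E) = t • T E)
    (hTbound : ∀ E : H →L[ℂ] H, IsEffect E →
      (∀ᵐ x ∂μ, 0 ≤ (T E : Ω → ℝ) x) ∧ (∀ᵐ x ∂μ, (T E : Ω → ℝ) x ≤ 1)) :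
    ∃ Ttilde : (H →L[ℂ] H) →ₗ[ℂ] Lp ℂ ⊤ μ,
      (∀ A : H →L[ℂ] H, A.IsPositive → ∀ᵐ x ∂μ, 0 ≤ (Ttilde A : Ω → ℂ) x) ∧
      ((Ttilde 1 : Ω → ℂ) =ᵐ[μ] fun _ => 1) ∧
      ∀ E : H →L[ℂ] H, IsEffect E →
        (Ttilde E : Ω → ℂ) =ᵐ[μ] fun x => ((T E : Ω → ℝ) x : ℂ) := by
  have hsmul : ∀ t ∈ Set.Icc (0 : ℝ) 1, ∀ E ∈ Set.Icc (0 : H →L[ℂ] H) 1,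
      T (t • E) = t • T E :=
    fun t ht E hE => by
      rw [← Complex.coe_smul]
      exact hTsmul t ht.1 ht.2 E (isEffect_iff_mem_Icc.2 hE)
  have hadd : ∀ E F : H →L[ℂ] H, 0 ≤ E → 0 ≤ F → E + F ≤ 1 →
      T (E + F) = T E + T F :=
    fun E F hE hF hEF => hTadd E F
      (isEffect_iff_mem_Icc.2 ⟨hE, (le_add_of_nonneg_right hF).trans hEF⟩)
      (isEffect_iff_mem_Icc.2 ⟨hF, (le_add_of_nonneg_left hE).trans hEF⟩)
      (by rwa [← ContinuousLinearMap.nonneg_iff_isPositive, sub_nonneg])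
  let ι := Complex.ofRealCLM.compLpₗ ⊤ μ
  have hι (f : Lp ℝ ⊤ μ) : (ι f : Ω → ℂ) =ᵐ[μ] fun x => ((f : Ω → ℝ) x : ℂ) :=
    Complex.ofRealCLM.coeFn_compLp' f
  let Ttilde := effectExtension ι hsmul hadd
  have hext (E : H →L[ℂ] H) (hE : IsEffect E) :
      (Ttilde E : Ω → ℂ) =ᵐ[μ] fun x => ((T E : Ω → ℝ) x : ℂ) := by
    rw [effectExtension_apply_of_mem_Icc ι hsmul hadd (isEffect_iff_mem_Icc.1 hE)]
    exact hι _
  refine ⟨Ttilde, fun A hA => ?_, ?_, hext⟩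
  · rw [← ContinuousLinearMap.nonneg_iff_isPositive] at hA
    have hEff : IsEffect ((‖A‖ + 1)⁻¹ • A) :=
      isEffect_iff_mem_Icc.2 (inv_smul_mem_Icc hA (by positivity) (by linarith))
    filter_upwards [hι (posExt T A), Lp.coeFn_smul (‖A‖ + 1) (T ((‖A‖ + 1)⁻¹ • A)),
      (hTbound _ hEff).1] with x hιx hsmulx hx
    rw [effectExtension_apply_of_nonneg ι hsmul hadd hA, hιx, posExt, hsmulx, Pi.smul_apply,
      smul_eq_mul, Complex.zero_le_real]
    positivity
  · filter_upwards [hext 1 (isEffect_iff_mem_Icc.2 ⟨zero_le_one, le_rfl⟩), hT1] with x hx h1x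
    rw [hx, h1x, Complex.ofReal_one]

/-- A map `T` from the effects of `B(H)` to `L^∞(Ω, μ; ℝ)` which is normalized, additive
on effects summing to at most `1`, homogeneous for scalars in `[0,1]`, and takes values
in `[0,1]` a.e., extends to a positive unital `ℂ`-linear map `T̃ : B(H) → L^∞(Ω, μ; ℂ)`. -/
theorem stmt8 {H : Type*} [NormedAddCommGroup H] [InnerProductSpace ℂ H] [CompleteSpace H]
    {Ω : Type*} [MeasurableSpace Ω] [StandardBorelSpace Ω] (μ : Measure Ω)
    (T : (H →L[ℂ] H) → Lp ℝ ⊤ μ)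
    (hT1 : (T 1 : Ω → ℝ) =ᵐ[μ] fun _ => 1)
    (hTadd : ∀ E F : H →L[ℂ] H, IsEffect E → IsEffect F → (1 - (E + F)).IsPositive →
      T (E + F) = T E + T F)
    (hTsmul : ∀ t : ℝ, 0 ≤ t → t ≤ 1 → ∀ E : H →L[ℂ] H, IsEffect E →
      T ((t : ℂ) • E) = t • T E)
    (hTbound : ∀ E : H →L[ℂ] H, IsEffect E →
      (∀ᵐ x ∂μ, 0 ≤ (T E : Ω → ℝ) x) ∧ (∀ᵐ x ∂μ, (T E : Ω → ℝ) x ≤ 1)) :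
    ∃ Ttilde : (H →L[ℂ] H) →ₗ[ℂ] Lp ℂ ⊤ μ,
      (∀ A : H →L[ℂ] H, A.IsPositive → ∀ᵐ x ∂μ, 0 ≤ (Ttilde A : Ω → ℂ) x) ∧
      ((Ttilde 1 : Ω → ℂ) =ᵐ[μ] fun _ => 1) ∧
      ∀ E : H →L[ℂ] H, IsEffect E →
        (Ttilde E : Ω → ℂ) =ᵐ[μ] fun x => ((T E : Ω → ℝ) x : ℂ) :=
  stmt8_general μ T hT1 hTadd hTsmul hTbound
end

section
/- Let H be a nontrivial complex Hilbert space, (Ω, 𝒜) a measurable space, and P : 𝒜 → B(H) a PVM. Let n ∈ ℕ and K₁, …, K_n ∈ 𝒜. Then there exist m ∈ ℕ, pairwise disjoint sets X₀, X₁, …, X_m ∈ 𝒜 whose union is Ω, and unit vectors φ₀, …, φ_m ∈ H with P(X_i)φ_i = φ_i whenever P(X_i) ≠ 0, such that for every k ∈ {1, …, n}: P(K_k) = Σ_{i=0}^{m} ⟪φ_i, P(K_k) φ_i⟫ · P(X_i). In particular, every P(K_k) is a fixed point of the entanglement-breaking channel A ↦ Σ_{i=0}^{m} ⟪φ_i,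 A φ_i⟫ · P(X_i) on B(H). -/
open MeasureTheory
open scoped ComplexInnerProductSpace

/-- A POVM on a measurable space `Ω` with values in `B(H)`: positive operator values,
normalization `M(Ω) = 1`, and weak countable additivity. -/
def IsPOVM {H : Type*} [NormedAddCommGroup H] [InnerProductSpace ℂ H] [CompleteSpace H]
    {Ω : Type*} [MeasurableSpace Ω] (M : Set Ω → (H →L[ℂ] H)) : Prop :=
  (∀ X : Set Ω, MeasurableSet X → (M X).IsPositive) ∧
  M Set.univ = 1 ∧
  ∀ (φ : H) (X : ℕ → Set Ω), (∀ n, MeasurableSet (X n)) →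
    (Pairwise fun m n => Disjoint (X m) (X n)) →
    HasSum (fun n => ⟪φ, M (X n) φ⟫) ⟪φ, M (⋃ n, X n) φ⟫

/-- A PVM: a POVM whose values are orthogonal projections and which is multiplicative. -/
def IsPVM {H : Type*} [NormedAddCommGroup H] [InnerProductSpace ℂ H] [CompleteSpace H]
    {Ω : Type*} [MeasurableSpace Ω] (P : Set Ω → (H →L[ℂ] H)) : Prop :=
  IsPOVM P ∧
  (∀ X : Set Ω, MeasurableSet X → IsSelfAdjoint (P X) ∧ P X * P X = P X) ∧
  ∀ X Y : Set Ω, MeasurableSet X → MeasurableSet Y → P (X ∩ Y) = P X * P Y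

/-!
The sets `K₁, …, Kₙ` cut `Ω` into `2ⁿ` (possibly empty) Boolean atoms, each of which lies either inside
or outside every `K_k`. Since `P(K ∩ X) = P(K) P(X)`, for a unit vector `φ` in the range of
`P(X)` the number `⟪φ, P(K) φ⟫` is `1` when `X ⊆ K` and `0` when `X` misses `K`, so
`⟪φ, P(K) φ⟫ • P(X) = P(K ∩ X)`. Summing over the atoms `X` and using finite additivity of `P`
gives back `P(K)`.
-/

open Set Function

theorem ContinuousLinearMap.ext_inner_self {H : Type*} [NormedAddCommGroup H]
    [InnerProductSpace ℂ H] {S T : H →L[ℂ] H} (h : ∀ x, ⟪x, S x⟫ = ⟪x, T x⟫) : S = T := by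
  have : (S : H →ₗ[ℂ] H) = T := by
    rw [← ext_inner_map]
    intro x
    simpa only [inner_conj_symm, ContinuousLinearMap.coe_coe] using congrArg (starRingEnd ℂ) (h x)
  exact ContinuousLinearMap.coe_injective this

theorem IsIdempotentElem.exists_norm_eq_one_apply_eq_self {𝕜 E : Type*} [RCLike 𝕜]
    [NormedAddCommGroup E] [NormedSpace 𝕜 E] [Nontrivial E] {T : E →L[𝕜] E}
    (hT : IsIdempotentElem T) : ∃ x : E, ‖x‖ = 1 ∧ (T ≠ 0 → T x = x) := by
  obtain ⟨v, hv0, hv⟩ : ∃ v : E, v ≠ 0 ∧ (T ≠ 0 → T v = v) := by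
    by_cases hT0 : T = 0
    · obtain ⟨v, hv⟩ := exists_ne (0 : E)
      exact ⟨v, hv, fun h => absurd hT0 h⟩
    · obtain ⟨w, hw⟩ : ∃ w, T w ≠ 0 := by
        by_contra! h
        exact hT0 (ContinuousLinearMap.ext h)
      exact ⟨T w, hw, fun _ => by rw [← mul_apply_eq_comp, hT.eq]⟩
  exact ⟨(‖v‖⁻¹ : 𝕜) • v, norm_smul_inv_norm hv0, fun h => by rw [map_smul, hv h]⟩

section POVM

variable {H : Type*} [NormedAddCommGroup H] [InnerProductSpace ℂ H] [CompleteSpace H]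
  {Ω : Type*} [MeasurableSpace Ω] {M : Set Ω → (H →L[ℂ] H)}

theorem IsPOVM.map_empty (hM : IsPOVM M) : M ∅ = 0 := by
  refine ContinuousLinearMap.ext_inner_self fun φ => ?_
  have hsum := hM.2.2 φ (fun _ => ∅) (fun _ => .empty) fun _ _ _ => disjoint_empty _
  rw [iUnion_empty] at hsum
  simpa using tendsto_nhds_unique tendsto_const_nhds hsum.summable.tendsto_atTop_zero

noncomputable def IsPOVM.toVectorMeasure (hM : IsPOVM M) (φ : H) : VectorMeasure Ω ℂ where
  measureOf' X := open Classical in if MeasurableSet X then ⟪φ, M X φ⟫ else 0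
  empty' := by simp [hM.map_empty]
  not_measurable' X hX := if_neg hX
  m_iUnion' X hX hd := by
    simpa only [if_pos (hX _), if_pos (MeasurableSet.iUnion hX)] using hM.2.2 φ X hX hd

theorem IsPOVM.toVectorMeasure_apply (hM : IsPOVM M) (φ : H) {X : Set Ω}
    (hX : MeasurableSet X) : hM.toVectorMeasure φ X = ⟪φ, M X φ⟫ :=
  if_pos hX

theorem IsPOVM.map_iUnion {ι : Type*} [Fintype ι] (hM : IsPOVM M) {X : ι → Set Ω}
    (hX : ∀ i, MeasurableSet (X i)) (hd : Pairwise (Disjoint on X)) :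
    M (⋃ i, X i) = ∑ i, M (X i) := by
  refine ContinuousLinearMap.ext_inner_self fun φ => ?_
  have := (hM.toVectorMeasure φ).of_disjoint_iUnion hX hd
  rw [tsum_fintype, hM.toVectorMeasure_apply φ (.iUnion hX)] at this
  simp only [this, hM.toVectorMeasure_apply φ (hX _), sum_apply, inner_sum]

end POVM

section PVM

variable {H : Type*} [NormedAddCommGroup H] [InnerProductSpace ℂ H] [CompleteSpace H]
  {Ω : Type*} [MeasurableSpace Ω] {P : Set Ω → (H →L[ℂ] H)}

theorem IsPVM.map_inter_eq_inner_smul (hP : IsPVM P) {K X : Set Ω} (hK : MeasurableSet K)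
    (hX : MeasurableSet X) (hKX : X ⊆ K ∨ Disjoint K X) {φ : H} (hφ : ‖φ‖ = 1)
    (hφX : P X ≠ 0 → P X φ = φ) : P (K ∩ X) = ⟪φ, P K φ⟫ • P X := by
  have hmul := hP.2.2 K X hK hX
  by_cases hX0 : P X = 0
  · rw [hmul, hX0, mul_zero, smul_zero]
  have hKφ : P K φ = P (K ∩ X) φ := by
    rw [hmul, mul_apply_eq_comp, hφX hX0]
  rcases hKX with hsub | hdisj
  · rw [inter_eq_self_of_subset_right hsub] at hKφ ⊢
    rw [hKφ, hφX hX0, inner_self_eq_norm_sq_to_K, hφ]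
    simp
  · rw [disjoint_iff_inter_eq_empty.mp hdisj] at hKφ ⊢
    simp [hKφ, hP.1.map_empty]

theorem IsPVM.eq_sum_inner_smul_of_partition {ι : Type*} [Fintype ι] (hP : IsPVM P)
    {X : ι → Set Ω} (hX : ∀ i, MeasurableSet (X i)) (hd : Pairwise (Disjoint on X))
    (hcover : ⋃ i, X i = univ) {φ : ι → H} (hφ : ∀ i, ‖φ i‖ = 1)
    (hφX : ∀ i, P (X i) ≠ 0 → P (X i) (φ i) = φ i) {K : Set Ω} (hK : MeasurableSet K)
    (hKX : ∀ i, X i ⊆ K ∨ Disjoint K (X i)) :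
    P K = ∑ i, ⟪φ i, P K (φ i)⟫ • P (X i) := by
  calc P K = P (⋃ i, K ∩ X i) := by rw [← inter_iUnion, hcover, inter_univ]
    _ = ∑ i, P (K ∩ X i) := hP.1.map_iUnion (fun i => hK.inter (hX i))
          fun i j hij => (hd hij).mono inter_subset_right inter_subset_right
    _ = ∑ i, ⟪φ i, P K (φ i)⟫ • P (X i) := Finset.sum_congr rfl fun i _ =>
          hP.map_inter_eq_inner_smul hK (hX i) (hKX i) (hφ i) (hφX i)

end PVM

section BooleanAtom

variable {ι Ω : Type*}

def booleanAtom (K : ι → Set Ω) (s : ι → Bool) : Set Ω :=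
  ⋂ k, if s k then K k else (K k)ᶜ

theorem mem_booleanAtom_iff {K : ι → Set Ω} {s : ι → Bool} {ω : Ω} :
    ω ∈ booleanAtom K s ↔ ∀ k, (ω ∈ K k ↔ s k = true) := by
  simp only [booleanAtom, mem_iInter]
  refine forall_congr' fun k => ?_
  cases s k <;> simp

theorem measurableSet_booleanAtom [Countable ι] [MeasurableSpace Ω] {K : ι → Set Ω}
    (hK : ∀ k, MeasurableSet (K k)) (s : ι → Bool) : MeasurableSet (booleanAtom K s) :=
  .iInter fun k => by
    cases s k
    exacts [(hK k).compl, hK k]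

theorem pairwise_disjoint_booleanAtom (K : ι → Set Ω) : Pairwise (Disjoint on booleanAtom K) := by
  intro s t hst
  obtain ⟨k, hk⟩ := Function.ne_iff.mp hst
  refine disjoint_left.mpr fun ω hs ht => hk ?_
  rw [Bool.eq_iff_iff, ← mem_booleanAtom_iff.mp hs k, mem_booleanAtom_iff.mp ht k]

open Classical in
theorem iUnion_booleanAtom (K : ι → Set Ω) : ⋃ s, booleanAtom K s = univ :=
  eq_univ_of_forall fun ω =>
    mem_iUnion.mpr ⟨fun k => decide (ω ∈ K k), mem_booleanAtom_iff.mpr fun k => by simp⟩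

theorem booleanAtom_subset_or_disjoint (K : ι → Set Ω) (s : ι → Bool) (k : ι) :
    booleanAtom K s ⊆ K k ∨ Disjoint (K k) (booleanAtom K s) := by
  cases hs : s k
  · exact .inr <| disjoint_right.mpr fun ω hω => by simp [mem_booleanAtom_iff.mp hω k, hs]
  · exact .inl fun ω hω => (mem_booleanAtom_iff.mp hω k).mpr hs

end BooleanAtom

/-- Given a PVM `P` and finitely many measurable sets `K₁, …, Kₙ`, there is a finite
measurable partition `X₀, …, X_m` of `Ω` and unit vectors `φ₀, …, φ_m` supported by the
`P(Xᵢ)`, such that every `P(K_k)` is a fixed point of the entanglement-breaking channel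
`A ↦ Σᵢ ⟪φᵢ, A φᵢ⟫ P(Xᵢ)`. -/
theorem stmt9 {H : Type*} [NormedAddCommGroup H] [InnerProductSpace ℂ H] [CompleteSpace H]
    [Nontrivial H]
    {Ω : Type*} [MeasurableSpace Ω] (P : Set Ω → (H →L[ℂ] H)) (hP : IsPVM P)
    (n : ℕ) (K : Fin n → Set Ω) (hK : ∀ k, MeasurableSet (K k)) :
    ∃ (m : ℕ) (X : Fin (m + 1) → Set Ω) (φ : Fin (m + 1) → H),
      (∀ i, MeasurableSet (X i)) ∧
      (Pairwise fun i j => Disjoint (X i) (X j)) ∧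
      (⋃ i, X i) = Set.univ ∧
      (∀ i, ‖φ i‖ = 1) ∧
      (∀ i, P (X i) ≠ 0 → P (X i) (φ i) = φ i) ∧
      ∀ k : Fin n, P (K k) = ∑ i, ⟪φ i, P (K k) (φ i)⟫ • P (X i) := by
  obtain ⟨e⟩ : Nonempty (Fin (2 ^ n - 1 + 1) ≃ (Fin n → Bool)) := by
    rw [← Fintype.card_eq, Fintype.card_fun, Fintype.card_bool, Fintype.card_fin, Fintype.card_fin,
      Nat.sub_add_cancel Nat.one_le_two_pow]
  let X := booleanAtom K ∘ e
  have hX : ∀ i, MeasurableSet (X i) := fun i => measurableSet_booleanAtom hK (e i)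
  have hd : Pairwise (Disjoint on X) :=
    (pairwise_disjoint_booleanAtom K).comp_of_injective e.injective
  have hcover : ⋃ i, X i = univ := (e.surjective.iUnion_comp _).trans (iUnion_booleanAtom K)
  choose φ hφ hφX using fun i =>
    IsIdempotentElem.exists_norm_eq_one_apply_eq_self (hP.2.1 (X i) (hX i)).2
  exact ⟨2 ^ n - 1, X, φ, hX, hd, hcover, hφ, hφX, fun k =>
    hP.eq_sum_inner_smul_of_partition hX hd hcover hφ hφX (hK k)
      fun i => booleanAtom_subset_or_disjoint K (e i) k⟩
end

section
/- Let H be a separable complex Hilbert space, (Ω, 𝒜) a standard Borel space, and P : 𝒜 → B(H) a PVM. Suppose there exist a countable family (G_i)_{i ∈ ℕ} of positive operators in B(H) with Σ_i ⟪φ, G_i φ⟫ = ‖φ‖² for every φ ∈ H, and density operators (σ_i)_{i ∈ ℕ}, such that every effect of P is a fixed point of the associated Heisenberg-picture entanglement-breaking channel, i.e., for every X ∈ 𝒜 and all φ, ψ ∈ H: ⟪φ, P(X) ψ⟫ = Σ_i tr(σ_i P(X)) · ⟪φ, G_i ψ⟫. Then: (a) P is discrete, i.e., there is a countable set D ⊆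 Ω with P(Ω ∖ D) = 0; and (b) if Q : 𝒜' → B(H) is a PVM on a standard Borel space (Ω', 𝒜') satisfying the same fixed-point property with the same families (G_i) and (σ_i), then P(X) Q(Y) = Q(Y) P(X) for all X ∈ 𝒜 and Y ∈ 𝒜'. -/
open MeasureTheory
open scoped ComplexInnerProductSpace

/-- A density operator on `H`: an operator of the form `ρ = Σ_k t_k |ψ_k⟩⟨ψ_k|` for a
countable orthonormal family `(ψ_k)` and nonnegative reals `t_k` summing to `1`, the
series converging in operator norm. -/
structure DensityOperator (H : Type*) [NormedAddCommGroup H] [InnerProductSpace ℂ H]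
    [CompleteSpace H] where
  toCLM : H →L[ℂ] H
  ι : Type
  countable : Countable ι
  ψ : ι → H
  t : ι → ℝ
  t_nonneg : ∀ k, 0 ≤ t k
  t_sum : HasSum t 1
  ortho : Orthonormal ℂ ψ
  decomp : HasSum (fun k => ((t k : ℝ) : ℂ) • ((innerSL ℂ (ψ k)).smulRight (ψ k))) toCLM

/-- The trace `tr(ρ A) = Σ_k t_k ⟪ψ_k, A ψ_k⟫`. -/
noncomputable def DensityOperator.tr {H : Type*} [NormedAddCommGroup H]
    [InnerProductSpace ℂ H] [CompleteSpace H] (ρ : DensityOperator H)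
    (A : H →L[ℂ] H) : ℂ :=
  ∑' k : ρ.ι, ((ρ.t k : ℝ) : ℂ) * ⟪ρ.ψ k, A (ρ.ψ k)⟫

/-! Fix a measurable `X` and let `νᵢ = tr(σᵢ P(·))`, a probability measure. For `φ` with
`P(X) φ = 0` the fixed-point identity reads `∑ᵢ νᵢ(X) ⟪φ, Gᵢ φ⟫ = 0`, a sum of nonnegative terms,
so `Gᵢ` kills `ker P(X)` as soon as `νᵢ(X) ≠ 0`. Applied to `X` or to `Xᶜ` this gives
`Gᵢ P(X) ∈ {Gᵢ, 0}`, so `P(X)` commutes with every `Gᵢ`, and therefore with every other fixed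
point `Q(Y)`. If `Gᵢ ≠ 0`, then `νᵢ` cannot charge both `X` and `Xᶜ`: it is a zero-one measure,
hence a Dirac mass `δ_{ωᵢ}` on the standard Borel space, and `P` lives on the countable set of
the `ωᵢ`. -/

namespace ContinuousLinearMap

variable {H : Type*} [NormedAddCommGroup H] [InnerProductSpace ℂ H]

theorem IsPositive.apply_eq_zero_of_inner_self_eq_zero [CompleteSpace H] {T : H →L[ℂ] H}
    (hT : T.IsPositive) {x : H} (hx : ⟪x, T x⟫ = 0) : T x = 0 := by
  obtain ⟨S, hS, rfl⟩ : ∃ S : H →L[ℂ] H, IsSelfAdjoint S ∧ T = S * S :=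
    ⟨CFC.sqrt T, (CFC.sqrt_nonneg T).isSelfAdjoint,
      (CFC.sqrt_mul_sqrt_self T ((nonneg_iff_isPositive T).mpr hT)).symm⟩
  have hSx : ⟪S x, S x⟫ = 0 := (hS.isSymmetric x (S x)).trans hx
  change S (S x) = 0
  rw [inner_self_eq_zero.mp hSx, map_zero]

theorem IsPositive.inner_self_eq_re {T : H →L[ℂ] H} (hT : T.IsPositive) (x : H) :
    ⟪x, T x⟫ = (⟪x, T x⟫.re : ℂ) :=
  Complex.eq_re_of_ofReal_le (r := 0) <| by
    rw [Complex.ofReal_zero]; exact hT.inner_nonneg_right x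

end ContinuousLinearMap

namespace IsPOVM

variable {H : Type*} [NormedAddCommGroup H] [InnerProductSpace ℂ H] [CompleteSpace H]
  {Ω : Type*} [MeasurableSpace Ω] {M : Set Ω → (H →L[ℂ] H)}

theorem re_inner_nonneg (hM : IsPOVM M) {X : Set Ω} (hX : MeasurableSet X) (φ : H) :
    0 ≤ ⟪φ, M X φ⟫.re :=
  (hM.1 X hX).re_inner_nonneg_right φ

theorem inner_empty (hM : IsPOVM M) (φ : H) : ⟪φ, M ∅ φ⟫ = 0 :=
  (summable_const_iff _).mp
    (hM.2.2 φ (fun _ => ∅) (fun _ => .empty) fun _ _ _ => disjoint_bot_left).summable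

noncomputable def measure (hM : IsPOVM M) (φ : H) : Measure Ω :=
  Measure.ofMeasurable (fun X _ => ENNReal.ofReal ⟪φ, M X φ⟫.re) (by simp [hM.inner_empty])
    fun X hX hd => by
      have hsum := Complex.hasSum_re (hM.2.2 φ X hX hd)
      rw [← hsum.tsum_eq]
      exact ENNReal.ofReal_tsum_of_nonneg
        (fun n => hM.re_inner_nonneg (hX n) φ) hsum.summable

theorem measure_apply (hM : IsPOVM M) (φ : H) {X : Set Ω} (hX : MeasurableSet X) :
    hM.measure φ X = ENNReal.ofReal ⟪φ, M X φ⟫.re :=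
  Measure.ofMeasurable_apply X hX

theorem re_inner_le (hM : IsPOVM M) {X : Set Ω} (hX : MeasurableSet X) (φ : H) :
    ⟪φ, M X φ⟫.re ≤ ‖φ‖ ^ 2 := by
  have h := measure_mono (μ := hM.measure φ) (Set.subset_univ X)
  rw [hM.measure_apply φ hX, hM.measure_apply φ .univ, hM.2.1, one_apply_eq_self] at h
  exact ((ENNReal.ofReal_le_ofReal_iff (inner_self_nonneg (𝕜 := ℂ))).mp h).trans_eq
    (inner_self_eq_norm_sq φ)

end IsPOVM

namespace DensityOperator

variable {H : Type*} [NormedAddCommGroup H] [InnerProductSpace ℂ H] [CompleteSpace H]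
  {Ω : Type*} [MeasurableSpace Ω] {M : Set Ω → (H →L[ℂ] H)}

noncomputable def measure (ρ : DensityOperator H) (hM : IsPOVM M) : Measure Ω :=
  Measure.sum fun k => ENNReal.ofReal (ρ.t k) • hM.measure (ρ.ψ k)

theorem summable_mul_re_inner (ρ : DensityOperator H) (hM : IsPOVM M) {X : Set Ω}
    (hX : MeasurableSet X) : Summable fun k => ρ.t k * ⟪ρ.ψ k, M X (ρ.ψ k)⟫.re := by
  refine ρ.t_sum.summable.of_nonneg_of_le
    (fun k => mul_nonneg (ρ.t_nonneg k) (hM.re_inner_nonneg hX _)) fun k => ?_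
  refine mul_le_of_le_one_right (ρ.t_nonneg k) ?_
  simpa [ρ.ortho.1 k] using hM.re_inner_le hX (ρ.ψ k)

theorem measure_apply (ρ : DensityOperator H) (hM : IsPOVM M) {X : Set Ω}
    (hX : MeasurableSet X) :
    ρ.measure hM X = ENNReal.ofReal (∑' k, ρ.t k * ⟪ρ.ψ k, M X (ρ.ψ k)⟫.re) := by
  rw [measure, Measure.sum_apply _ hX, ENNReal.ofReal_tsum_of_nonneg
    (fun k => mul_nonneg (ρ.t_nonneg k) (hM.re_inner_nonneg hX _))
    (ρ.summable_mul_re_inner hM hX)]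
  refine tsum_congr fun k => ?_
  rw [Measure.smul_apply, hM.measure_apply _ hX, smul_eq_mul,
    ENNReal.ofReal_mul (ρ.t_nonneg k)]

theorem tr_eq (ρ : DensityOperator H) (hM : IsPOVM M) {X : Set Ω} (hX : MeasurableSet X) :
    ρ.tr (M X) = ((ρ.measure hM).real X : ℂ) := by
  rw [measureReal_def, ρ.measure_apply hM hX, ENNReal.toReal_ofReal (tsum_nonneg fun k =>
    mul_nonneg (ρ.t_nonneg k) (hM.re_inner_nonneg hX _)), Complex.ofReal_tsum, tr]
  refine tsum_congr fun k => ?_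
  rw [Complex.ofReal_mul, ← (hM.1 X hX).inner_self_eq_re]

instance isProbabilityMeasure_measure (ρ : DensityOperator H) (hM : IsPOVM M) :
    IsProbabilityMeasure (ρ.measure hM) := by
  refine ⟨?_⟩
  rw [ρ.measure_apply hM .univ, hM.2.1]
  simp [ρ.ortho.1, ρ.t_sum.tsum_eq]

end DensityOperator

namespace IsPVM

variable {H : Type*} [NormedAddCommGroup H] [InnerProductSpace ℂ H] [CompleteSpace H]
  {Ω : Type*} [MeasurableSpace Ω] {P : Set Ω → (H →L[ℂ] H)}

theorem empty (hP : IsPVM P) : P ∅ = 0 := by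
  ext φ
  exact (hP.1.1 ∅ .empty).apply_eq_zero_of_inner_self_eq_zero (hP.1.inner_empty φ)

theorem compl_mul (hP : IsPVM P) {X : Set Ω} (hX : MeasurableSet X) : P Xᶜ * P X = 0 := by
  rw [← hP.2.2 _ _ hX.compl hX, Set.compl_inter_self, hP.empty]

theorem apply_apply (hP : IsPVM P) {X : Set Ω} (hX : MeasurableSet X) (φ : H) :
    P X (P X φ) = P X φ :=
  congrArg (· φ) (hP.2.1 X hX).2

end IsPVM

section EBChannel

variable {H : Type*} [NormedAddCommGroup H] [InnerProductSpace ℂ H] [CompleteSpace H]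

/-- Fixed points of the Heisenberg-picture entanglement-breaking channel
`A ↦ ∑ᵢ tr(σᵢ A) Gᵢ`, the series taken in the weak operator sense. -/
def IsEBChannelFixedPt (G : ℕ → H →L[ℂ] H) (σ : ℕ → DensityOperator H) (A : H →L[ℂ] H) :
    Prop :=
  ∀ φ χ : H, ⟪φ, A χ⟫ = ∑' i, (σ i).tr A * ⟪φ, G i χ⟫

theorem IsEBChannelFixedPt.commute {G : ℕ → H →L[ℂ] H} {σ : ℕ → DensityOperator H}
    {A B : H →L[ℂ] H} (hA : IsSelfAdjoint A) (hAG : ∀ i, Commute A (G i))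
    (hB : IsEBChannelFixedPt G σ B) : Commute A B := by
  ext χ
  refine ext_inner_left ℂ fun φ => ?_
  have hAsymm : ∀ x y, ⟪A x, y⟫ = ⟪x, A y⟫ := hA.isSymmetric
  change ⟪φ, A (B χ)⟫ = ⟪φ, B (A χ)⟫
  rw [← hAsymm, hB, hB]
  refine tsum_congr fun i => ?_
  rw [hAsymm]
  exact congrArg (fun T : H →L[ℂ] H => (σ i).tr B * ⟪φ, T χ⟫) (hAG i).eq

variable {Ω : Type*} [MeasurableSpace Ω] {P : Set Ω → (H →L[ℂ] H)}
  {G : ℕ → H →L[ℂ] H} {σ : ℕ → DensityOperator H}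

theorem apply_eq_zero_of_measure_ne_zero (hP : IsPVM P) (hGpos : ∀ i, (G i).IsPositive)
    (hGsum : ∀ φ : H, HasSum (fun i => ⟪φ, G i φ⟫) ((‖φ‖ ^ 2 : ℝ) : ℂ))
    (hfix : ∀ X, MeasurableSet X → IsEBChannelFixedPt G σ (P X))
    {X : Set Ω} (hX : MeasurableSet X) {i : ℕ} (hi : (σ i).measure hP.1 X ≠ 0)
    {φ : H} (hφ : P X φ = 0) : G i φ = 0 := by
  set r : ℕ → ℝ := fun j => ((σ j).measure hP.1).real X
  set g : ℕ → ℝ := fun j => ⟪φ, G j φ⟫.re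
  have hg0 (j : ℕ) : 0 ≤ g j := (hGpos j).re_inner_nonneg_right φ
  have hg : HasSum g (‖φ‖ ^ 2) := by
    simpa only [Complex.ofReal_re] using Complex.hasSum_re (hGsum φ)
  have hrg : Summable fun j => r j * g j :=
    hg.summable.of_nonneg_of_le (fun j => mul_nonneg measureReal_nonneg (hg0 j))
      fun j => mul_le_of_le_one_left (hg0 j) measureReal_le_one
  have hsum : ∑' j, r j * g j = 0 := by
    have h := hfix X hX φ φ
    rw [hφ, inner_zero_right] at h
    have hC : ((∑' j, r j * g j : ℝ) : ℂ) = 0 := by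
      rw [Complex.ofReal_tsum]
      refine (tsum_congr fun j => ?_).trans h.symm
      rw [Complex.ofReal_mul, (σ j).tr_eq hP.1 hX, ← (hGpos j).inner_self_eq_re]
    exact_mod_cast hC
  have hterm : r i * g i = 0 := by
    have := (hasSum_zero_iff_of_nonneg fun j => mul_nonneg measureReal_nonneg (hg0 j)).mp
      (hsum ▸ hrg.hasSum)
    exact congrFun this i
  have hgi : g i = 0 := (mul_eq_zero.mp hterm).resolve_left (by
    simpa [r, measureReal_eq_zero_iff] using hi)
  refine (hGpos i).apply_eq_zero_of_inner_self_eq_zero ?_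
  rw [(hGpos i).inner_self_eq_re]
  exact_mod_cast hgi

theorem mul_eq_self_of_measure_ne_zero (hP : IsPVM P) (hGpos : ∀ i, (G i).IsPositive)
    (hGsum : ∀ φ : H, HasSum (fun i => ⟪φ, G i φ⟫) ((‖φ‖ ^ 2 : ℝ) : ℂ))
    (hfix : ∀ X, MeasurableSet X → IsEBChannelFixedPt G σ (P X))
    {X : Set Ω} (hX : MeasurableSet X) {i : ℕ} (hi : (σ i).measure hP.1 X ≠ 0) :
    G i * P X = G i := by
  ext φ
  have h := apply_eq_zero_of_measure_ne_zero hP hGpos hGsum hfix hX hi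
    (φ := φ - P X φ) (by rw [map_sub, hP.apply_apply hX, sub_self])
  exact (sub_eq_zero.mp ((map_sub _ _ _).symm.trans h)).symm

theorem mul_eq_self_or_eq_zero (hP : IsPVM P) (hGpos : ∀ i, (G i).IsPositive)
    (hGsum : ∀ φ : H, HasSum (fun i => ⟪φ, G i φ⟫) ((‖φ‖ ^ 2 : ℝ) : ℂ))
    (hfix : ∀ X, MeasurableSet X → IsEBChannelFixedPt G σ (P X))
    {X : Set Ω} (hX : MeasurableSet X) (i : ℕ) :
    G i * P X = G i ∨ G i * P X = 0 := by
  by_cases hi : (σ i).measure hP.1 X = 0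
  · right
    have hic : (σ i).measure hP.1 Xᶜ ≠ 0 := by
      rw [prob_compl_eq_one_iff hX |>.mpr hi]; exact one_ne_zero
    rw [← mul_eq_self_of_measure_ne_zero hP hGpos hGsum hfix hX.compl hic, mul_assoc,
      hP.compl_mul hX, mul_zero]
  · exact .inl (mul_eq_self_of_measure_ne_zero hP hGpos hGsum hfix hX hi)

theorem commute_apply (hP : IsPVM P) (hGpos : ∀ i, (G i).IsPositive)
    (hGsum : ∀ φ : H, HasSum (fun i => ⟪φ, G i φ⟫) ((‖φ‖ ^ 2 : ℝ) : ℂ))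
    (hfix : ∀ X, MeasurableSet X → IsEBChannelFixedPt G σ (P X))
    {X : Set Ω} (hX : MeasurableSet X) (i : ℕ) : Commute (P X) (G i) := by
  have hstar : P X * G i = star (G i * P X) := by
    rw [star_mul, (hP.2.1 X hX).1.star_eq, (hGpos i).isSelfAdjoint.star_eq]
  rcases mul_eq_self_or_eq_zero hP hGpos hGsum hfix hX i with h | h
  · rw [Commute, SemiconjBy, hstar, h, (hGpos i).isSelfAdjoint.star_eq]
  · rw [Commute, SemiconjBy, hstar, h, star_zero]

theorem isZeroOneMeasure_measure (hP : IsPVM P) (hGpos : ∀ i, (G i).IsPositive)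
    (hGsum : ∀ φ : H, HasSum (fun i => ⟪φ, G i φ⟫) ((‖φ‖ ^ 2 : ℝ) : ℂ))
    (hfix : ∀ X, MeasurableSet X → IsEBChannelFixedPt G σ (P X))
    {i : ℕ} (hGi : G i ≠ 0) : IsZeroOneMeasure ((σ i).measure hP.1) := by
  refine ⟨fun X hX => or_iff_not_imp_left.mpr fun hi => ?_⟩
  refine (prob_compl_eq_zero_iff hX).mp (by_contra fun hic => hGi ?_)
  rw [← mul_eq_self_of_measure_ne_zero hP hGpos hGsum hfix hX hi,
    ← mul_eq_self_of_measure_ne_zero hP hGpos hGsum hfix hX.compl hic, mul_assoc,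
    hP.compl_mul hX, mul_zero]

theorem eq_zero_of_measure_eq_zero (hM : IsPOVM P)
    (hfix : ∀ X, MeasurableSet X → IsEBChannelFixedPt G σ (P X))
    {X : Set Ω} (hX : MeasurableSet X) (h : ∀ i, G i ≠ 0 → (σ i).measure hM X = 0) :
    P X = 0 := by
  ext χ
  refine ext_inner_left ℂ fun φ => ?_
  rw [hfix X hX, zero_apply, inner_zero_right]
  refine (tsum_congr fun i => ?_).trans tsum_zero
  by_cases hGi : G i = 0
  · rw [hGi, zero_apply, inner_zero_right, mul_zero]
  · rw [(σ i).tr_eq hM hX, measureReal_def, h i hGi, ENNReal.toReal_zero, Complex.ofReal_zero,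
      zero_mul]

end EBChannel

theorem stmt11_general {H : Type*} [NormedAddCommGroup H] [InnerProductSpace ℂ H] [CompleteSpace H]
    {Ω : Type*} [MeasurableSpace Ω] [StandardBorelSpace Ω]
    (P : Set Ω → (H →L[ℂ] H)) (hP : IsPVM P)
    (G : ℕ → H →L[ℂ] H) (σ : ℕ → DensityOperator H)
    (hGpos : ∀ i, (G i).IsPositive)
    (hGsum : ∀ φ : H, HasSum (fun i => ⟪φ, G i φ⟫) ((‖φ‖ ^ 2 : ℝ) : ℂ))
    (hfix : ∀ X : Set Ω, MeasurableSet X → ∀ φ χ : H,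
      ⟪φ, P X χ⟫ = ∑' i, (σ i).tr (P X) * ⟪φ, G i χ⟫) :
    (∃ D : Set Ω, D.Countable ∧ P (Set.univ \ D) = 0) ∧
    (∀ (Ω' : Type) [MeasurableSpace Ω'] [StandardBorelSpace Ω'],
      ∀ Q : Set Ω' → (H →L[ℂ] H), IsPVM Q →
        (∀ Y : Set Ω', MeasurableSet Y → ∀ φ χ : H,
          ⟪φ, Q Y χ⟫ = ∑' i, (σ i).tr (Q Y) * ⟪φ, G i χ⟫) →
        ∀ (X : Set Ω) (Y : Set Ω'), MeasurableSet X → MeasurableSet Y →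
          P X * Q Y = Q Y * P X) := by
  refine ⟨?_, fun Ω' _ _ Q _ hfixQ X Y hX hY =>
    IsEBChannelFixedPt.commute (hP.2.1 X hX).1 (commute_apply hP hGpos hGsum hfix hX)
      (hfixQ Y hY)⟩
  have hdirac (i : {i // G i ≠ 0}) : ∃ ω, (σ i).measure hP.1 = Measure.dirac ω :=
    have := isZeroOneMeasure_measure hP hGpos hGsum hfix i.2
    IsZeroOneMeasure.exists_eq_dirac
  choose ω hω using hdirac
  have hD : MeasurableSet (Set.univ \ Set.range ω) :=
    MeasurableSet.univ.diff (Set.countable_range ω).measurableSet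
  refine ⟨Set.range ω, Set.countable_range ω, eq_zero_of_measure_eq_zero hP.1 hfix hD
    fun i hi => ?_⟩
  rw [hω ⟨i, hi⟩, Measure.dirac_apply' _ hD]
  exact Set.indicator_of_notMem (fun h => h.2 ⟨⟨i, hi⟩, rfl⟩) _

/-- If every effect of a PVM `P` on a standard Borel space is a fixed point of the
Heisenberg-picture entanglement-breaking channel `A ↦ Σᵢ tr(σᵢ A) Gᵢ`, then (a) `P` is
discrete, and (b) `P` commutes with any PVM `Q` having the same fixed-point property
with the same families `(Gᵢ)` and `(σᵢ)`. -/
theorem stmt11 {H : Type*} [NormedAddCommGroup H] [InnerProductSpace ℂ H] [CompleteSpace H]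
    [TopologicalSpace.SeparableSpace H]
    {Ω : Type*} [MeasurableSpace Ω] [StandardBorelSpace Ω]
    (P : Set Ω → (H →L[ℂ] H)) (hP : IsPVM P)
    (G : ℕ → H →L[ℂ] H) (σ : ℕ → DensityOperator H)
    (hGpos : ∀ i, (G i).IsPositive)
    (hGsum : ∀ φ : H, HasSum (fun i => ⟪φ, G i φ⟫) ((‖φ‖ ^ 2 : ℝ) : ℂ))
    (hfix : ∀ X : Set Ω, MeasurableSet X → ∀ φ χ : H,
      ⟪φ, P X χ⟫ = ∑' i, (σ i).tr (P X) * ⟪φ, G i χ⟫) :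
    (∃ D : Set Ω, D.Countable ∧ P (Set.univ \ D) = 0) ∧
    (∀ (Ω' : Type) [MeasurableSpace Ω'] [StandardBorelSpace Ω'],
      ∀ Q : Set Ω' → (H →L[ℂ] H), IsPVM Q →
        (∀ Y : Set Ω', MeasurableSet Y → ∀ φ χ : H,
          ⟪φ, Q Y χ⟫ = ∑' i, (σ i).tr (Q Y) * ⟪φ, G i χ⟫) →
        ∀ (X : Set Ω) (Y : Set Ω'), MeasurableSet X → MeasurableSet Y →
          P X * Q Y = Q Y * P X) :=
  stmt11_general P hP G σ hGpos hGsum hfix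
end
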